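/- arXiv:2104.07120 — 6 statements merged into one kernel-verified Lean document; each statement's English description precedes it below -/
import Mathlib

section
/- Let a and b be integers with a ≤ b and let g : ℝ → ℝ be continuously differentiable on [a, b]. Then |∑_{n=a}^{b} g(n) − ∫_a^b g(x) dx − (g(a) + g(b))/2| ≤ (1/2) ∫_a^b |g'(x)| dx. -/
/-!
Integrating by parts against `x - (u + v) / 2` shows that the trapezoid rule on `[u, v]` errs
by `∫ (x - (u + v) / 2) g'`, which is at most `(v - u) / 2 * ∫ |g'|` since the weight is bounded
by `(v - u) / 2`. Summing this over the unit intervals `[n, n + 1]`, `a ≤ n < b`, gives the bound.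
-/

open intervalIntegral MeasureTheory

section TrapezoidRule

variable {g g' : ℝ → ℝ} {u v : ℝ}

theorem integral_sub_midpoint_mul_deriv_eq
    (hderiv : ∀ x ∈ Set.uIcc u v, HasDerivAt g (g' x) x)
    (hg' : IntervalIntegrable g' volume u v) :
    ∫ x in u..v, (x - (u + v) / 2) * g' x = (v - u) / 2 * (g u + g v) - ∫ x in u..v, g x := by
  have hweight : ∀ x ∈ Set.uIcc u v, HasDerivAt (fun x ↦ x - (u + v) / 2) 1 x :=
    fun x _ ↦ (hasDerivAt_id x).sub_const _
  rw [integral_mul_deriv_eq_deriv_mul hweight hderiv intervalIntegrable_const hg']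
  simp only [one_mul]
  ring

theorem abs_trapezoid_sub_integral_le (huv : u ≤ v)
    (hderiv : ∀ x ∈ Set.Icc u v, HasDerivAt g (g' x) x)
    (hg' : IntervalIntegrable g' volume u v) :
    |(v - u) / 2 * (g u + g v) - ∫ x in u..v, g x| ≤ (v - u) / 2 * ∫ x in u..v, |g' x| := by
  rw [← integral_sub_midpoint_mul_deriv_eq (Set.uIcc_of_le huv ▸ hderiv) hg',
    ← intervalIntegral.integral_const_mul, ← Real.norm_eq_abs]
  refine norm_integral_le_of_norm_le huv (ae_of_all _ fun x hx ↦ ?_) (hg'.abs.const_mul _)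
  have hweight : |x - (u + v) / 2| ≤ (v - u) / 2 := abs_le.2 ⟨by linarith [hx.1], by linarith [hx.2]⟩
  rw [norm_mul, Real.norm_eq_abs, Real.norm_eq_abs]
  exact mul_le_mul_of_nonneg_right hweight (abs_nonneg _)

end TrapezoidRule

theorem abs_sum_Icc_sub_integral_sub_endpoints_le {g g' : ℝ → ℝ} {a b : ℤ} (hab : a ≤ b)
    (hderiv : ∀ x ∈ Set.Icc (a : ℝ) b, HasDerivAt g (g' x) x)
    (hg' : IntervalIntegrable g' volume (a : ℝ) b) :
    |∑ n ∈ Finset.Icc a b, g n - (∫ x in (a : ℝ)..b, g x) - (g a + g b) / 2| ≤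
      1 / 2 * ∫ x in (a : ℝ)..b, |g' x| := by
  induction b, hab using Int.leInduction with
  | base => simp
  | succ b hab ih =>
    rw [← Finset.insert_Icc_right_eq_Icc_add_one (by omega),
      Finset.sum_insert (by simp)]
    push_cast at hderiv hg' ⊢
    have hab' : (a : ℝ) ≤ b := by exact_mod_cast hab
    have hsub_left : Set.Icc (a : ℝ) b ⊆ Set.Icc (a : ℝ) (b + 1) :=
      Set.Icc_subset_Icc_right (by linarith)
    have hsub_right : Set.Icc (b : ℝ) (b + 1) ⊆ Set.Icc (a : ℝ) (b + 1) :=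
      Set.Icc_subset_Icc_left hab'
    have hg'_left : IntervalIntegrable g' volume (a : ℝ) b :=
      hg'.mono_set (by rwa [Set.uIcc_of_le hab', Set.uIcc_of_le (by linarith)])
    have hg'_right : IntervalIntegrable g' volume (b : ℝ) (b + 1) :=
      hg'.mono_set (by rwa [Set.uIcc_of_le (by linarith), Set.uIcc_of_le (by linarith)])
    have hg : ContinuousOn g (Set.Icc (a : ℝ) (b + 1)) :=
      HasDerivAt.continuousOn hderiv
    have hstep := abs_trapezoid_sub_integral_le (by linarith)
      (fun x hx ↦ hderiv x (hsub_right hx)) hg'_right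
    rw [add_sub_cancel_left] at hstep
    have herror_left := ih (fun x hx ↦ hderiv x (hsub_left hx)) hg'_left
    rw [← integral_add_adjacent_intervals ((hg.mono hsub_left).intervalIntegrable_of_Icc hab')
        ((hg.mono hsub_right).intervalIntegrable_of_Icc (by linarith)),
      ← integral_add_adjacent_intervals hg'_left.abs hg'_right.abs]
    calc _ = |((∑ n ∈ Finset.Icc a b, g n - ∫ x in (a : ℝ)..b, g x) - (g a + g b) / 2) +
          (1 / 2 * (g b + g (b + 1)) - ∫ x in (b : ℝ)..b + 1, g x)| := by congr 1; ring
      _ ≤ _ := (abs_add_le _ _).trans (add_le_add herror_left hstep)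
      _ = _ := by ring

/-- Remainder bound for the Euler–Maclaurin formula at order `M = 0`: for integers
`a ≤ b` and `g` continuously differentiable on `[a, b]` with derivative `g'`,
`|∑_{n=a}^{b} g(n) − ∫_a^b g − (g a + g b)/2| ≤ (1/2) ∫_a^b |g'|`. -/
theorem stmt_2 (a b : ℤ) (hab : a ≤ b) (g g' : ℝ → ℝ)
    (hderiv : ∀ x ∈ Set.Icc (a : ℝ) (b : ℝ), HasDerivAt g (g' x) x)
    (hcont : ContinuousOn g' (Set.Icc (a : ℝ) (b : ℝ))) :
    |∑ n ∈ Finset.Icc a b, g (n : ℝ) - (∫ x in (a : ℝ)..(b : ℝ), g x)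
        - (g (a : ℝ) + g (b : ℝ)) / 2| ≤
      (1 / 2) * ∫ x in (a : ℝ)..(b : ℝ), |g' x| :=
  abs_sum_Icc_sub_integral_sub_endpoints_le hab hderiv
    (hcont.intervalIntegrable_of_Icc (by exact_mod_cast hab))
end

section
/- lim_{N→∞} [∑_{n=0}^{N−1} |cot((2n+1)π/(2N))|] / (N ln N) = 2/π. -/
/-!
On `(0, π)`, `|cot θ|` differs from `θ⁻¹ + (π - θ)⁻¹` by at most `2`. At the nodes
`θₙ = (2n+1)π/(2N)` the reflection `π - θₙ = θ_{N-1-n}` turns the sum of the latter into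
`(4N/π) ∑_{n<N} 1/(2n+1) = (4N/π) (H_{2N} - H_N / 2)`, which is `(2/π) N log N + O(N)` since
`H_n = log n + γ + o(1)`. So the sum of `|cot θₙ|` is `(2/π) N log N + O(N)`.
-/

open Real Filter Asymptotics Finset Topology

namespace Real

variable {θ : ℝ}

lemma cot_pi_sub (θ : ℝ) : cot (π - θ) = -cot θ := by
  rw [cot_eq_cos_div_sin, cot_eq_cos_div_sin, cos_pi_sub, sin_pi_sub, neg_div]

lemma cot_nonneg_of_le_pi_div_two (h₀ : 0 ≤ θ) (h : θ ≤ π / 2) : 0 ≤ cot θ := by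
  rw [cot_eq_cos_div_sin]
  exact div_nonneg (cos_nonneg_of_mem_Icc ⟨by linarith [pi_pos], h⟩)
    (sin_nonneg_of_nonneg_of_le_pi h₀ (by linarith [pi_pos]))

lemma cot_le_inv (h₀ : 0 < θ) (h : θ ≤ π / 2) : cot θ ≤ θ⁻¹ := by
  rcases h.lt_or_eq with h | rfl
  · rw [← inv_inv (cot θ), cot_inv_eq_tan]
    exact inv_anti₀ h₀ (le_tan h₀.le h)
  · rw [cot_eq_cos_div_sin, cos_pi_div_two, zero_div]
    positivity

lemma inv_sub_half_le_cot (h₀ : 0 < θ) (h : θ ≤ π / 2) : θ⁻¹ - θ / 2 ≤ cot θ := by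
  have hsin : 0 < sin θ := sin_pos_of_pos_of_lt_pi h₀ (by linarith [pi_pos])
  rw [cot_eq_cos_div_sin, le_div_iff₀ hsin]
  rcases le_or_gt (θ⁻¹ - θ / 2) 0 with hneg | hpos
  · exact (mul_nonpos_of_nonpos_of_nonneg hneg hsin.le).trans
      (cos_nonneg_of_mem_Icc ⟨by linarith [pi_pos], h⟩)
  · calc (θ⁻¹ - θ / 2) * sin θ ≤ (θ⁻¹ - θ / 2) * θ := by gcongr; exact sin_le h₀.le
      _ = 1 - θ ^ 2 / 2 := by field_simp
      _ ≤ cos θ := one_sub_sq_div_two_le_cos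

lemma abs_abs_cot_sub_inv_add_inv_le (h₀ : 0 < θ) (hπ : θ < π) :
    |(|cot θ|) - (θ⁻¹ + (π - θ)⁻¹)| ≤ 2 := by
  have half : ∀ φ, 0 < φ → φ ≤ π / 2 → |(|cot φ|) - (φ⁻¹ + (π - φ)⁻¹)| ≤ 2 := by
    intro φ hφ₀ hφ
    have hπ3 := pi_gt_three
    have hπ4 := pi_le_four
    have hfar : (π - φ)⁻¹ ≤ 1 := inv_le_one_of_one_le₀ (by linarith)
    rw [abs_of_nonneg (cot_nonneg_of_le_pi_div_two hφ₀.le hφ), abs_le]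
    constructor
    · linarith [inv_sub_half_le_cot hφ₀ hφ]
    · linarith [cot_le_inv hφ₀ hφ, inv_pos.2 (by linarith : 0 < π - φ)]
  rcases le_or_gt θ (π / 2) with h | h
  · exact half θ h₀ h
  · simpa [cot_pi_sub, add_comm] using half (π - θ) (by linarith) (by linarith)

end Real

lemma Asymptotics.IsLittleO.tendsto_div_of_sub {α : Type*} {l : Filter α} {f g : α → ℝ} {c : ℝ}
    (h : (fun x ↦ f x - c * g x) =o[l] g) (hg : ∀ᶠ x in l, g x ≠ 0) :
    Tendsto (fun x ↦ f x / g x) l (𝓝 c) := by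
  have := h.tendsto_div_nhds_zero.add_const c
  rw [zero_add] at this
  refine this.congr' ?_
  filter_upwards [hg] with x hx
  field_simp
  ring

lemma sum_inv_two_mul_add_one_eq_harmonic (N : ℕ) :
    ∑ n ∈ range N, (2 * (n : ℝ) + 1)⁻¹ = harmonic (2 * N) - harmonic N / 2 := by
  induction N with
  | zero => simp
  | succ N ih =>
    rw [sum_range_succ, ih, show 2 * (N + 1) = 2 * N + 1 + 1 by ring, harmonic_succ,
      harmonic_succ, harmonic_succ]
    push_cast
    field_simp
    ring

lemma tendsto_sum_inv_two_mul_add_one_sub_log :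
    Tendsto (fun N : ℕ ↦ ∑ n ∈ range N, (2 * (n : ℝ) + 1)⁻¹ - log N / 2) atTop
      (𝓝 (eulerMascheroniConstant / 2 + log 2)) := by
  have h2N : Tendsto (fun N : ℕ ↦ (harmonic (2 * N) : ℝ) - log ↑(2 * N)) atTop
      (𝓝 eulerMascheroniConstant) :=
    tendsto_harmonic_sub_log.comp (tendsto_id.const_mul_atTop' two_pos)
  have := (h2N.sub (tendsto_harmonic_sub_log.div_const 2)).add_const (log 2)
  rw [show eulerMascheroniConstant - eulerMascheroniConstant / 2 + log 2
    = eulerMascheroniConstant / 2 + log 2 by ring] at this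
  refine this.congr' ?_
  filter_upwards [eventually_ne_atTop 0] with N hN
  rw [sum_inv_two_mul_add_one_eq_harmonic, Nat.cast_mul, Nat.cast_two,
    log_mul two_ne_zero (Nat.cast_ne_zero.2 hN)]
  ring

lemma sum_inv_add_inv_pi_sub (N : ℕ) :
    ∑ n ∈ range N,
        (((2 * (n : ℝ) + 1) * π / (2 * N))⁻¹ + (π - (2 * (n : ℝ) + 1) * π / (2 * N))⁻¹)
      = 4 * N / π * ∑ n ∈ range N, (2 * (n : ℝ) + 1)⁻¹ := by
  have reflect : ∑ n ∈ range N, (π - (2 * (n : ℝ) + 1) * π / (2 * N))⁻¹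
      = ∑ n ∈ range N, ((2 * (n : ℝ) + 1) * π / (2 * N))⁻¹ := by
    rw [← sum_range_reflect]
    refine sum_congr rfl fun n hn ↦ ?_
    have hn := mem_range.1 hn
    have hN : (N : ℝ) ≠ 0 := Nat.cast_ne_zero.2 (by omega)
    rw [Nat.cast_sub (by omega), Nat.cast_sub (by omega)]
    congr 1
    field_simp
    push_cast
    ring
  rw [sum_add_distrib, reflect, ← two_mul, mul_sum, mul_sum]
  refine sum_congr rfl fun n _ ↦ ?_
  rw [inv_div]
  field_simp
  ring

lemma abs_sum_abs_cot_sub_le (N : ℕ) :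
    |∑ n ∈ range N, |cot ((2 * (n : ℝ) + 1) * π / (2 * N))|
        - 4 * N / π * ∑ n ∈ range N, (2 * (n : ℝ) + 1)⁻¹| ≤ 2 * N := by
  rw [← sum_inv_add_inv_pi_sub, ← sum_sub_distrib]
  refine (abs_sum_le_sum_abs _ _).trans ?_
  calc _ ≤ ∑ _n ∈ range N, (2 : ℝ) := sum_le_sum fun n hn ↦ ?_
    _ = 2 * N := by simp [mul_comm]
  have hn : (n : ℝ) + 1 ≤ N := by exact_mod_cast mem_range.1 hn
  have hN : (0 : ℝ) < N := by linarith [n.cast_nonneg (α := ℝ)]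
  refine abs_abs_cot_sub_inv_add_inv_le (by positivity) ?_
  rw [div_lt_iff₀ (by positivity)]
  nlinarith [pi_pos]

lemma isLittleO_sum_abs_cot_sub :
    (fun N : ℕ ↦ ∑ n ∈ range N, |cot ((2 * (n : ℝ) + 1) * π / (2 * N))|
        - 2 / π * (N * log N)) =o[atTop] fun N : ℕ ↦ (N : ℝ) * log N := by
  have hsum : (fun N : ℕ ↦ ∑ n ∈ range N, |cot ((2 * (n : ℝ) + 1) * π / (2 * N))|
      - 4 * N / π * ∑ n ∈ range N, (2 * (n : ℝ) + 1)⁻¹) =O[atTop] fun N : ℕ ↦ (N : ℝ) :=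
    .of_bound 2 <| .of_forall fun N ↦ by
      simpa [abs_of_nonneg (N.cast_nonneg (α := ℝ))] using abs_sum_abs_cot_sub_le N
  have hodd : (fun N : ℕ ↦ 4 / π * N * (∑ n ∈ range N, (2 * (n : ℝ) + 1)⁻¹ - log N / 2))
      =O[atTop] fun N : ℕ ↦ (N : ℝ) := by
    simpa using ((isBigO_refl (fun N : ℕ ↦ (N : ℝ)) atTop).const_mul_left (4 / π)).mul
      (tendsto_sum_inv_two_mul_add_one_sub_log.isBigO_one ℝ)
  have hlog : (fun N : ℕ ↦ (N : ℝ)) =o[atTop] fun N : ℕ ↦ (N : ℝ) * log N := by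
    simpa using ((isBigO_refl (fun x : ℝ ↦ x) atTop).mul_isLittleO
      (isLittleO_const_log_atTop (c := 1))).natCast_atTop
  refine ((hsum.add hodd).trans_isLittleO hlog).congr_left fun N ↦ ?_
  ring

/-- `lim_{N→∞} [∑_{n=0}^{N-1} |cot((2n+1)π/(2N))|] / (N ln N) = 2/π`. -/
theorem stmt_5 :
    Tendsto
      (fun N : ℕ =>
        (∑ n ∈ Finset.range N,
            |Real.cot ((2 * (n : ℝ) + 1) * Real.pi / (2 * (N : ℝ)))|) /
          ((N : ℝ) * Real.log (N : ℝ)))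
      atTop (nhds (2 / Real.pi)) := by
  refine isLittleO_sum_abs_cot_sub.tendsto_div_of_sub ?_
  filter_upwards [eventually_ge_atTop 2] with N hN
  have hN : (1 : ℝ) < N := by exact_mod_cast hN
  exact mul_ne_zero (by positivity) (log_pos hN).ne'
end

section
/- Let Q be a natural number and let κ : ℝ → ℝ be (2Q+1)-times continuously differentiable on [1, ∞), such that for every q with 0 ≤ q ≤ 2Q the q-th derivative κ^{(q)} is bounded on [1, ∞), and the (2Q+1)-st derivative κ^{(2Q+1)} is absolutely integrable on [1, ∞). Then there exists a constant C > 0 such that for every integer M ≥ 1 and every k ∈ (0, π], |∑_{l=1}^{M} κ(l) sin(k l) − ∫_1^M κ(x) sin(k x) dx| ≤ C. -/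
/-!
Euler–Maclaurin to first order writes `∑ g(l) - ∫ g`, for `g(x) = κ(x) sin(kx)`, as bounded
boundary terms plus `∫ P₁ g'`, where `P₁(x) = B₁({x})` is the sawtooth. Since `g'` is a combination
of `κ'` and `k κ` against trigonometric factors, one more integration by parts replaces `P₁` by the
periodic Bernoulli function `P₂(x) = B₂({x}) = ∑ₙ cos(2πnx) / (π² n²)`, whose Fourier series
converges absolutely. The `n`-th mode produces oscillations of frequency `2πn ± k`, at least `π` in
absolute value because `k ∈ (0, π]`; moving all derivatives onto `κ` by repeated integration by
parts bounds such an oscillatory integral by the sup norms of `κ, …, κ^(2Q)` and the `L¹` norm of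
`κ^(2Q+1)`, uniformly in the frequency, and the weights `1 / n²` are summable.
-/

open Real MeasureTheory intervalIntegral Set

lemma ContinuousOn.intervalIntegrable_of_Ici {g : ℝ → ℝ} {a x y : ℝ}
    (hg : ContinuousOn g (Ici a)) (hx : a ≤ x) (hy : a ≤ y) : IntervalIntegrable g volume x y :=
  (hg.mono fun _ ht => le_trans (le_inf hx hy) ht.1).intervalIntegrable

lemma HasDerivAt.mul_cos_add {g : ℝ → ℝ} {g' ω φ x : ℝ} (hg : HasDerivAt g g' x) :
    HasDerivAt (fun x => g x * Real.cos (ω * x + φ))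
      (g' * Real.cos (ω * x + φ) + ω * (g x * Real.cos (ω * x + (φ + π / 2)))) x := by
  rw [← add_assoc, Real.cos_add_pi_div_two]
  exact (hg.mul (((hasDerivAt_id x).const_mul ω).add_const φ).cos).congr_deriv
    (by simp only [id]; ring)

lemma abs_integral_le_mul_integral_Ici {F f : ℝ → ℝ} {a M c : ℝ} (haM : a ≤ M) (hc : 0 ≤ c)
    (hF : ∀ x, |F x| ≤ c * |f x|) (hf : IntegrableOn (fun x => |f x|) (Ici a)) :
    |∫ x in a..M, F x| ≤ c * ∫ x in Ici a, |f x| := by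
  have hIoc : Ioc a M ⊆ Ici a := Ioc_subset_Icc_self.trans Icc_subset_Ici_self
  have hfM : IntegrableOn (fun x => |f x|) (Ioc a M) := hf.mono_set hIoc
  calc |∫ x in a..M, F x| ≤ ∫ x in a..M, c * |f x| :=
        norm_integral_le_of_norm_le (f := F) haM (ae_of_all _ fun x _ => hF x)
          (((intervalIntegrable_iff_integrableOn_Ioc_of_le haM).mpr hfM).const_mul c)
    _ = c * ∫ x in Ioc a M, |f x| := by
        rw [intervalIntegral.integral_const_mul, integral_of_le haM]
    _ ≤ c * ∫ x in Ici a, |f x| := mul_le_mul_of_nonneg_left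
        (setIntegral_mono_set hf (ae_of_all _ fun x => abs_nonneg _) hIoc.eventuallyLE) hc

lemma abs_integral_cos_two_pi_mul_le {g : ℝ → ℝ} {a M C ω φ : ℝ} (haM : a ≤ M)
    (hg : ContinuousOn g (Icc a M))
    (hC : ∀ ω', 1 ≤ |ω'| → ∀ φ', |∫ x in a..M, g x * cos (ω' * x + φ')| ≤ C)
    (hω : |ω| ≤ π) {n : ℕ} (hn : n ≠ 0) :
    |∫ x in a..M, cos (2 * π * n * x) * (g x * cos (ω * x + φ))| ≤ C := by
  have hn1 : (1 : ℝ) ≤ n := by exact_mod_cast Nat.one_le_iff_ne_zero.mpr hn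
  obtain ⟨hω₁, hω₂⟩ := abs_le.mp hω
  -- the product splits into oscillations of frequencies `2πn ± ω`, both at least `π ≥ 1`
  have hfreq₁ : 1 ≤ |2 * π * n + ω| := by
    rw [abs_of_nonneg (by nlinarith [pi_gt_three])]; nlinarith [pi_gt_three]
  have hfreq₂ : 1 ≤ |2 * π * n - ω| := by
    rw [abs_of_nonneg (by nlinarith [pi_gt_three])]; nlinarith [pi_gt_three]
  have hint (ω' φ' : ℝ) : IntervalIntegrable (fun x => g x * cos (ω' * x + φ')) volume a M :=
    (hg.mul (by fun_prop)).intervalIntegrable_of_Icc haM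
  have hsplit : ∫ x in a..M, cos (2 * π * n * x) * (g x * cos (ω * x + φ)) =
      ((∫ x in a..M, g x * cos ((2 * π * n + ω) * x + φ)) +
        ∫ x in a..M, g x * cos ((2 * π * n - ω) * x + -φ)) / 2 := by
    rw [← integral_add (hint _ _) (hint _ _), ← intervalIntegral.integral_div]
    congr 1 with x
    rw [show (2 * π * n + ω) * x + φ = 2 * π * n * x + (ω * x + φ) by ring,
      show (2 * π * n - ω) * x + -φ = 2 * π * n * x - (ω * x + φ) by ring,
      cos_add (2 * π * n * x), cos_sub (2 * π * n * x)]
    ring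
  rw [hsplit, abs_div, abs_two]
  linarith [abs_add_le (∫ x in a..M, g x * cos ((2 * π * n + ω) * x + φ))
    (∫ x in a..M, g x * cos ((2 * π * n - ω) * x + -φ)), hC _ hfreq₁ φ, hC _ hfreq₂ (-φ)]

noncomputable def periodicBernoulli (k : ℕ) (x : ℝ) : ℝ := bernoulliFun k (Int.fract x)

namespace periodicBernoulli

@[simp]
lemma zero (x : ℝ) : periodicBernoulli 0 x = 1 := bernoulliFun_zero _

lemma eq_of_mem_Ico (k : ℕ) {l : ℤ} {x : ℝ} (hx : x ∈ Ico (l : ℝ) (l + 1)) :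
    periodicBernoulli k x = bernoulliFun k (x - l) := by
  rw [periodicBernoulli, (Int.fract_eq_iff (b := x - l)).mpr
    ⟨by linarith [hx.1], by linarith [hx.2], l, by ring⟩]

lemma measurable (k : ℕ) : Measurable (periodicBernoulli k) :=
  (continuous_bernoulliFun k).measurable.comp measurable_fract

lemma exists_abs_le (k : ℕ) : ∃ C, ∀ x, |periodicBernoulli k x| ≤ C := by
  obtain ⟨C, hC⟩ := (isCompact_Icc (a := (0 : ℝ)) (b := 1)).exists_bound_of_continuousOn
    (continuous_bernoulliFun k).continuousOn
  exact ⟨C, fun x => hC _ ⟨Int.fract_nonneg x, (Int.fract_lt_one x).le⟩⟩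

lemma intervalIntegrable_mul (k : ℕ) {f : ℝ → ℝ} {a b : ℝ}
    (hf : IntervalIntegrable f volume a b) :
    IntervalIntegrable (fun x => periodicBernoulli k x * f x) volume a b := by
  obtain ⟨C, hC⟩ := exists_abs_le k
  exact ⟨hf.1.bdd_mul (measurable k).aestronglyMeasurable (ae_of_all _ hC),
    hf.2.bdd_mul (measurable k).aestronglyMeasurable (ae_of_all _ hC)⟩

lemma integral_mul_add_const_mul (k : ℕ) {f g : ℝ → ℝ} {a b : ℝ} (c : ℝ)
    (hf : IntervalIntegrable f volume a b) (hg : IntervalIntegrable g volume a b) :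
    ∫ x in a..b, periodicBernoulli k x * (f x + c * g x) =
      (∫ x in a..b, periodicBernoulli k x * f x) +
        c * ∫ x in a..b, periodicBernoulli k x * g x := by
  rw [← intervalIntegral.integral_const_mul, ← integral_add (intervalIntegrable_mul k hf)
    ((intervalIntegrable_mul k hg).const_mul c)]
  congr 1 with x
  ring

lemma hasSum_cos_div_sq (x : ℝ) :
    HasSum (fun n : ℕ => 1 / (n : ℝ) ^ 2 * cos (2 * π * n * x))
      (π ^ 2 * periodicBernoulli 2 x) := by
  have h := hasSum_one_div_nat_pow_mul_cos one_ne_zero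
    ⟨Int.fract_nonneg x, (Int.fract_lt_one x).le⟩
  convert h using 2 with n
  · rw [← Int.self_sub_floor, mul_sub, ← cos_sub_int_mul_two_pi _ (n * ⌊x⌋), Int.cast_mul,
      Int.cast_natCast]
    ring_nf
  · simp only [Nat.reduceMul, Nat.reduceAdd, Nat.factorial_two, Nat.cast_ofNat]; ring
  · rfl

lemma hasSum_integral_cos_mul {G : ℝ → ℝ} {a b : ℝ} (hab : a ≤ b)
    (hG : ContinuousOn G (Icc a b)) :
    HasSum (fun n : ℕ => 1 / (n : ℝ) ^ 2 * ∫ x in a..b, cos (2 * π * n * x) * G x)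
      (π ^ 2 * ∫ x in a..b, periodicBernoulli 2 x * G x) := by
  set μ := volume.restrict (Ioc a b)
  set F : ℕ → ℝ → ℝ := fun n x => 1 / (n : ℝ) ^ 2 * cos (2 * π * n * x) * G x
  have hGi : Integrable G μ := hG.integrableOn_Icc.mono_set Ioc_subset_Icc_self
  have hF_int (n : ℕ) : Integrable (F n) μ :=
    ((continuous_const.mul (by fun_prop)).continuousOn.mul hG).integrableOn_Icc.mono_set
      Ioc_subset_Icc_self
  have hF_norm (n : ℕ) : ∫ x, ‖F n x‖ ∂μ ≤ 1 / (n : ℝ) ^ 2 * ∫ x, |G x| ∂μ := by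
    rw [← MeasureTheory.integral_const_mul]
    refine integral_mono (hF_int n).norm (hGi.abs.const_mul _) fun x => ?_
    simp only [F, Real.norm_eq_abs, abs_mul, abs_of_nonneg (by positivity : (0 : ℝ) ≤ 1 / n ^ 2)]
    exact mul_le_mul_of_nonneg_right (mul_le_of_le_one_right (by positivity) (abs_cos_le_one _))
      (abs_nonneg _)
  have hsum := hasSum_integral_of_summable_integral_norm hF_int
    (.of_nonneg_of_le (fun n => integral_nonneg fun x => norm_nonneg _) hF_norm
      (hasSum_zeta_two.summable.mul_right _))
  have hpt (x : ℝ) : ∑' n, F n x = π ^ 2 * (periodicBernoulli 2 x * G x) :=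
    ((hasSum_cos_div_sq x).mul_right (G x)).tsum_eq.trans (mul_assoc _ _ _)
  have hlim : ∫ x, ∑' n, F n x ∂μ = π ^ 2 * ∫ x in a..b, periodicBernoulli 2 x * G x := by
    simp only [hpt, MeasureTheory.integral_const_mul, integral_of_le hab, μ]
  have hterm (n : ℕ) :
      ∫ x, F n x ∂μ = 1 / (n : ℝ) ^ 2 * ∫ x in a..b, cos (2 * π * n * x) * G x := by
    simp only [integral_of_le hab, ← MeasureTheory.integral_const_mul, F, mul_assoc, μ]
  simpa only [hterm, hlim] using hsum

lemma integral_succ_mul_deriv_unit (k : ℕ) (l : ℤ) {f f' : ℝ → ℝ}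
    (hf : ∀ x ∈ Icc (l : ℝ) (l + 1), HasDerivAt f (f' x) x)
    (hf' : IntervalIntegrable f' volume l (l + 1)) :
    ∫ x in (l : ℝ)..l + 1, periodicBernoulli (k + 1) x * f' x =
      bernoulliFun (k + 1) 1 * f (l + 1) - bernoulliFun (k + 1) 0 * f l -
        (k + 1) * ∫ x in (l : ℝ)..l + 1, periodicBernoulli k x * f x := by
  have hIcc : uIcc (l : ℝ) (l + 1) = Icc (l : ℝ) (l + 1) := uIcc_of_le (by linarith)
  have shift (j : ℕ) (g : ℝ → ℝ) : ∫ x in (l : ℝ)..l + 1, periodicBernoulli j x * g x =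
      ∫ x in (l : ℝ)..l + 1, bernoulliFun j (x - l) * g x := by
    rw [integral_of_le (by linarith), integral_of_le (by linarith),
      integral_Ioc_eq_integral_Ioo, integral_Ioc_eq_integral_Ioo]
    exact setIntegral_congr_fun measurableSet_Ioo fun x hx => by
      rw [eq_of_mem_Ico j ⟨hx.1.le, hx.2⟩]
  have hB (x : ℝ) : HasDerivAt (fun x => bernoulliFun (k + 1) (x - l))
      ((k + 1) * bernoulliFun k (x - l)) x := by
    simpa using (hasDerivAt_bernoulliFun (k + 1) (x - l)).comp_sub_const x l
  have hIBP := integral_mul_deriv_eq_deriv_mul (fun x _ => hB x)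
    (fun x hx => hf x (hIcc ▸ hx))
    ((continuous_const.mul ((continuous_bernoulliFun k).comp
      (continuous_sub_right _))).intervalIntegrable _ _) hf'
  rw [shift, shift, hIBP, ← intervalIntegral.integral_const_mul]
  simp only [add_sub_cancel_left, sub_self, mul_assoc]

lemma sum_Icc_eq_integral_add (m : ℕ) {f f' : ℝ → ℝ}
    (hf : ∀ x ∈ Ici (m : ℝ), HasDerivAt f (f' x) x) (hf' : ContinuousOn f' (Ici (m : ℝ)))
    {M : ℕ} (hmM : m ≤ M) :
    ∑ l ∈ Finset.Icc m M, f l =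
      (f m + f M) / 2 + (∫ x in (m : ℝ)..M, f x) +
        ∫ x in (m : ℝ)..M, periodicBernoulli 1 x * f' x := by
  have hfc : ContinuousOn f (Ici (m : ℝ)) := fun x hx => (hf x hx).continuousAt.continuousWithinAt
  induction M, hmM using Nat.le_induction with
  | base => simp
  | succ N hmN ih =>
    have hN : (m : ℝ) ≤ N := by exact_mod_cast hmN
    have hN1 : (m : ℝ) ≤ N + 1 := by linarith
    have hunit := integral_succ_mul_deriv_unit 0 N (f := f) (f' := f')
      (fun x hx => hf x (hN.trans (by exact_mod_cast hx.1)))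
      (hf'.intervalIntegrable_of_Ici hN hN1)
    simp only [Int.cast_natCast, Nat.cast_zero, zero_add, zero, one_mul, bernoulliFun_one] at hunit
    rw [Finset.sum_Icc_succ_top (by omega), ih, Nat.cast_succ,
      ← integral_add_adjacent_intervals (hfc.intervalIntegrable_of_Ici le_rfl hN)
        (hfc.intervalIntegrable_of_Ici hN hN1),
      ← integral_add_adjacent_intervals
        (intervalIntegrable_mul 1 (hf'.intervalIntegrable_of_Ici le_rfl hN))
        (intervalIntegrable_mul 1 (hf'.intervalIntegrable_of_Ici hN hN1)), hunit]
    ring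

lemma integral_two_mul_deriv (m : ℕ) {f f' : ℝ → ℝ}
    (hf : ∀ x ∈ Ici (m : ℝ), HasDerivAt f (f' x) x) (hf' : ContinuousOn f' (Ici (m : ℝ)))
    {M : ℕ} (hmM : m ≤ M) :
    ∫ x in (m : ℝ)..M, periodicBernoulli 2 x * f' x =
      (f M - f m) / 6 - 2 * ∫ x in (m : ℝ)..M, periodicBernoulli 1 x * f x := by
  have hfc : ContinuousOn f (Ici (m : ℝ)) := fun x hx => (hf x hx).continuousAt.continuousWithinAt
  induction M, hmM using Nat.le_induction with
  | base => simp
  | succ N hmN ih =>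
    have hN : (m : ℝ) ≤ N := by exact_mod_cast hmN
    have hN1 : (m : ℝ) ≤ N + 1 := by linarith
    have hunit := integral_succ_mul_deriv_unit 1 N (f := f) (f' := f')
      (fun x hx => hf x (hN.trans (by exact_mod_cast hx.1)))
      (hf'.intervalIntegrable_of_Ici hN hN1)
    simp only [Int.cast_natCast, Nat.reduceAdd, Nat.cast_one, bernoulliFun_two] at hunit
    rw [Nat.cast_succ,
      ← integral_add_adjacent_intervals
        (intervalIntegrable_mul 2 (hf'.intervalIntegrable_of_Ici le_rfl hN))
        (intervalIntegrable_mul 2 (hf'.intervalIntegrable_of_Ici hN hN1)),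
      ← integral_add_adjacent_intervals
        (intervalIntegrable_mul 1 (hfc.intervalIntegrable_of_Ici le_rfl hN))
        (intervalIntegrable_mul 1 (hfc.intervalIntegrable_of_Ici hN hN1)), ih, hunit]
    ring

end periodicBernoulli

structure RegularDerivChain (h : ℕ → ℝ → ℝ) (r : ℕ) (a : ℝ) : Prop where
  hasDerivAt : ∀ s < r, ∀ x ∈ Ici a, HasDerivAt (h s) (h (s + 1) x) x
  bounded : ∀ s < r, ∃ B, ∀ x ∈ Ici a, |h s x| ≤ B
  continuousOn_top : ContinuousOn (h r) (Ici a)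
  integrableOn_abs_top : IntegrableOn (fun x => |h r x|) (Ici a)

namespace RegularDerivChain

variable {h : ℕ → ℝ → ℝ} {r : ℕ} {a : ℝ}

lemma tail (hc : RegularDerivChain h (r + 1) a) : RegularDerivChain (fun s => h (s + 1)) r a :=
  ⟨fun s hs => hc.hasDerivAt (s + 1) (by omega), fun s hs => hc.bounded (s + 1) (by omega),
    hc.continuousOn_top, hc.integrableOn_abs_top⟩

lemma continuousOn (hc : RegularDerivChain h r a) {s : ℕ} (hs : s ≤ r) :
    ContinuousOn (h s) (Ici a) := by
  rcases hs.lt_or_eq with hs | rfl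
  · exact fun x hx => (hc.hasDerivAt s hs x hx).continuousAt.continuousWithinAt
  · exact hc.continuousOn_top

lemma exists_abs_integral_mul_cos_le (hc : RegularDerivChain h r a) :
    ∃ C, ∀ ω, 1 ≤ |ω| → ∀ φ M, a ≤ M → |∫ x in a..M, h 0 x * cos (ω * x + φ)| ≤ C := by
  induction r generalizing h with
  | zero =>
    refine ⟨1 * ∫ x in Ici a, |h 0 x|, fun ω _ φ M haM =>
      abs_integral_le_mul_integral_Ici haM zero_le_one (fun x => ?_) hc.integrableOn_abs_top⟩
    rw [abs_mul, one_mul]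
    exact mul_le_of_le_one_right (abs_nonneg _) (abs_cos_le_one _)
  | succ r ih =>
    obtain ⟨C, hC⟩ := ih hc.tail
    obtain ⟨B, hB⟩ := hc.bounded 0 r.succ_pos
    refine ⟨2 * B + C, fun ω hω φ M haM => ?_⟩
    have hω0 : ω ≠ 0 := by rintro rfl; norm_num at hω
    set v : ℝ → ℝ := fun x => sin (ω * x + φ) / ω
    have hv (x : ℝ) : HasDerivAt v (cos (ω * x + φ)) x := by
      have := (((hasDerivAt_id x).const_mul ω).add_const φ).sin.div_const ω
      simpa [hω0] using this
    have hv_le (x : ℝ) : |v x| ≤ 1 := by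
      rw [abs_div]
      exact div_le_one_of_le₀ ((abs_sin_le_one _).trans hω) (abs_nonneg _)
    have hbdry {x : ℝ} (hx : a ≤ x) : |h 0 x * v x| ≤ B := by
      rw [abs_mul]
      exact (mul_le_of_le_one_right (abs_nonneg _) (hv_le x)).trans (hB x hx)
    have hsub : uIcc a M ⊆ Ici a := fun x hx => le_trans (le_inf le_rfl haM) hx.1
    have hIBP := intervalIntegral.integral_mul_deriv_eq_deriv_mul
      (fun x hx => hc.hasDerivAt 0 r.succ_pos x (hsub hx)) (fun x _ => hv x)
      ((hc.continuousOn (s := 1) (by omega)).intervalIntegrable_of_Ici le_rfl haM)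
      ((by fun_prop : Continuous fun x => cos (ω * x + φ)).intervalIntegrable _ _)
    have hrest :
        ∫ x in a..M, h 1 x * v x = (∫ x in a..M, h 1 x * cos (ω * x + (φ - π / 2))) / ω := by
      rw [← intervalIntegral.integral_div]
      congr 1 with x
      rw [show ω * x + (φ - π / 2) = ω * x + φ - π / 2 by ring, cos_sub_pi_div_two]
      ring
    have hrest_le : |∫ x in a..M, h 1 x * v x| ≤ C := by
      rw [hrest, abs_div]
      exact (div_le_self (abs_nonneg _) hω).trans (hC ω hω _ M haM)
    rw [hIBP]
    linarith [abs_sub (h 0 M * v M - h 0 a * v a) (∫ x in a..M, h 1 x * v x),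
      abs_sub (h 0 M * v M) (h 0 a * v a), hbdry haM, hbdry le_rfl]

lemma exists_abs_integral_periodicBernoulli_two_mul_cos_le (hc : RegularDerivChain h r a) :
    ∃ C, ∀ ω, |ω| ≤ π → ∀ φ M, a ≤ M →
      |∫ x in a..M, periodicBernoulli 2 x * (h 0 x * cos (ω * x + φ))| ≤ C := by
  obtain ⟨C, hC⟩ := hc.exists_abs_integral_mul_cos_le
  refine ⟨C / 6, fun ω hω φ M haM => ?_⟩
  have hh : ContinuousOn (h 0) (Icc a M) := (hc.continuousOn r.zero_le).mono Icc_subset_Ici_self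
  have hsum := periodicBernoulli.hasSum_integral_cos_mul
    (G := fun x => h 0 x * cos (ω * x + φ)) haM (hh.mul (by fun_prop))
  have hbound := hsum.norm_le_of_bounded (hasSum_zeta_two.mul_left C) fun n => by
    rcases eq_or_ne n 0 with rfl | hn
    · simp
    rw [norm_mul, Real.norm_eq_abs, Real.norm_eq_abs,
      abs_of_nonneg (by positivity : (0 : ℝ) ≤ 1 / n ^ 2), mul_comm]
    exact mul_le_mul_of_nonneg_right (abs_integral_cos_two_pi_mul_le haM hh
      (fun ω' hω' φ' => hC ω' hω' φ' M haM) hω hn) (by positivity)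
  rw [norm_mul, Real.norm_eq_abs, Real.norm_eq_abs, abs_of_pos (pow_pos pi_pos 2)] at hbound
  rw [le_div_iff₀ (by norm_num)]
  nlinarith [pow_pos pi_pos 2]

lemma exists_abs_integral_periodicBernoulli_one_mul_cos_le {m : ℕ}
    (hc : RegularDerivChain h r m) :
    ∃ C, ∀ ω, |ω| ≤ π → ∀ φ, ∀ M : ℕ, m ≤ M →
      |∫ x in (m : ℝ)..M, periodicBernoulli 1 x * (h 0 x * cos (ω * x + φ))| ≤ C := by
  cases r with
  | zero =>
    obtain ⟨c, hc₁⟩ := periodicBernoulli.exists_abs_le 1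
    have hc₀ : 0 ≤ c := (abs_nonneg _).trans (hc₁ 0)
    refine ⟨c * ∫ x in Ici (m : ℝ), |h 0 x|, fun ω _ φ M hmM =>
      abs_integral_le_mul_integral_Ici (by exact_mod_cast hmM) hc₀ (fun x => ?_)
        hc.integrableOn_abs_top⟩
    rw [abs_mul, abs_mul]
    exact mul_le_mul (hc₁ x) (mul_le_of_le_one_right (abs_nonneg _) (abs_cos_le_one _))
      (by positivity) hc₀
  | succ r =>
    obtain ⟨C₁, hC₁⟩ := hc.tail.exists_abs_integral_periodicBernoulli_two_mul_cos_le
    obtain ⟨C₀, hC₀⟩ := hc.exists_abs_integral_periodicBernoulli_two_mul_cos_le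
    obtain ⟨B, hB⟩ := hc.bounded 0 r.succ_pos
    refine ⟨B / 6 + (C₁ + π * C₀) / 2, fun ω hω φ M hmM => ?_⟩
    have hM : (m : ℝ) ≤ M := by exact_mod_cast hmM
    have hcont (s : ℕ) (hs : s ≤ r + 1) (φ' : ℝ) :
        ContinuousOn (fun x => h s x * cos (ω * x + φ')) (Ici (m : ℝ)) :=
      (hc.continuousOn hs).mul (by fun_prop)
    -- unlike the sawtooth, `periodicBernoulli 2` has an absolutely convergent Fourier series
    have hEM := periodicBernoulli.integral_two_mul_deriv m
      (fun x hx => HasDerivAt.mul_cos_add (hc.hasDerivAt 0 r.succ_pos x hx))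
      ((hcont 1 (by omega) φ).add (continuousOn_const.mul (hcont 0 (by omega) _))) hmM
    rw [periodicBernoulli.integral_mul_add_const_mul 2 ω
      ((hcont 1 (by omega) φ).intervalIntegrable_of_Ici le_rfl hM)
      ((hcont 0 (by omega) _).intervalIntegrable_of_Ici le_rfl hM)] at hEM
    have hbdry {x : ℝ} (hx : (m : ℝ) ≤ x) : |h 0 x * cos (ω * x + φ)| ≤ B := by
      rw [abs_mul]
      exact (mul_le_of_le_one_right (abs_nonneg _) (abs_cos_le_one _)).trans (hB x hx)
    have h₁ : |∫ x in (m : ℝ)..M, periodicBernoulli 2 x * (h 1 x * cos (ω * x + φ))| ≤ C₁ :=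
      hC₁ ω hω φ M hM
    have h₀ : |ω * ∫ x in (m : ℝ)..M, periodicBernoulli 2 x * (h 0 x * cos (ω * x + (φ + π / 2)))|
        ≤ π * C₀ := by
      rw [abs_mul]
      exact mul_le_mul hω (hC₀ ω hω _ M hM) (abs_nonneg _) pi_pos.le
    obtain ⟨hM₁, hM₂⟩ := abs_le.mp (hbdry hM)
    obtain ⟨hm₁, hm₂⟩ := abs_le.mp (hbdry le_rfl)
    obtain ⟨h₁₁, h₁₂⟩ := abs_le.mp h₁
    obtain ⟨h₀₁, h₀₂⟩ := abs_le.mp h₀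
    rw [abs_le]
    constructor <;> linarith

lemma exists_abs_sum_sub_integral_le {m : ℕ} (hc : RegularDerivChain h (r + 1) m) :
    ∃ C, ∀ M : ℕ, m ≤ M → ∀ k, |k| ≤ π → ∀ φ,
      |(∑ l ∈ Finset.Icc m M, h 0 l * cos (k * l + φ)) - ∫ x in (m : ℝ)..M, h 0 x * cos (k * x + φ)|
        ≤ C := by
  obtain ⟨C₁, hC₁⟩ := hc.tail.exists_abs_integral_periodicBernoulli_one_mul_cos_le
  obtain ⟨C₀, hC₀⟩ := hc.exists_abs_integral_periodicBernoulli_one_mul_cos_le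
  obtain ⟨B, hB⟩ := hc.bounded 0 r.succ_pos
  refine ⟨B + C₁ + π * C₀, fun M hmM k hk φ => ?_⟩
  have hM : (m : ℝ) ≤ M := by exact_mod_cast hmM
  have hcont (s : ℕ) (hs : s ≤ r + 1) (φ' : ℝ) :
      ContinuousOn (fun x => h s x * cos (k * x + φ')) (Ici (m : ℝ)) :=
    (hc.continuousOn hs).mul (by fun_prop)
  have hEM := periodicBernoulli.sum_Icc_eq_integral_add m
    (fun x hx => HasDerivAt.mul_cos_add (hc.hasDerivAt 0 r.succ_pos x hx))
    ((hcont 1 (by omega) φ).add (continuousOn_const.mul (hcont 0 (by omega) _))) hmM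
  rw [periodicBernoulli.integral_mul_add_const_mul 1 k
    ((hcont 1 (by omega) φ).intervalIntegrable_of_Ici le_rfl hM)
    ((hcont 0 (by omega) _).intervalIntegrable_of_Ici le_rfl hM)] at hEM
  have hbdry {x : ℝ} (hx : (m : ℝ) ≤ x) : |h 0 x * cos (k * x + φ)| ≤ B := by
    rw [abs_mul]
    exact (mul_le_of_le_one_right (abs_nonneg _) (abs_cos_le_one _)).trans (hB x hx)
  have h₁ : |∫ x in (m : ℝ)..M, periodicBernoulli 1 x * (h 1 x * cos (k * x + φ))| ≤ C₁ :=
    hC₁ k hk φ M hmM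
  have h₀ : |k * ∫ x in (m : ℝ)..M, periodicBernoulli 1 x * (h 0 x * cos (k * x + (φ + π / 2)))|
      ≤ π * C₀ := by
    rw [abs_mul]
    exact mul_le_mul hk (hC₀ k hk _ M hmM) (abs_nonneg _) pi_pos.le
  obtain ⟨hM₁, hM₂⟩ := abs_le.mp (hbdry hM)
  obtain ⟨hm₁, hm₂⟩ := abs_le.mp (hbdry le_rfl)
  obtain ⟨h₁₁, h₁₂⟩ := abs_le.mp h₁
  obtain ⟨h₀₁, h₀₂⟩ := abs_le.mp h₀
  rw [hEM, abs_le]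
  constructor <;> linarith

end RegularDerivChain

/-- Euler–Maclaurin control of the pairing function (Theorem 2 / Appendix E):
if `κ` is `(2Q+1)`-times continuously differentiable on `[1,∞)` (the family `κd q`
of successive derivatives, `κd 0 = κ`), with `κd q` bounded on `[1,∞)` for
`0 ≤ q ≤ 2Q` and `κd (2Q+1)` absolutely integrable on `[1,∞)`, then there is a
constant `C > 0` such that for all integers `M ≥ 1` and all `k ∈ (0, π]`,
`|∑_{l=1}^M κ(l) sin(kl) − ∫_1^M κ(x) sin(kx) dx| ≤ C`. -/
theorem stmt_10 (Q : ℕ) (κ : ℝ → ℝ) (κd : ℕ → ℝ → ℝ) (hκ0 : κd 0 = κ)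
    (hderiv : ∀ q < 2 * Q + 1, ∀ x ∈ Set.Ici (1 : ℝ),
      HasDerivAt (κd q) (κd (q + 1) x) x)
    (hconttop : ContinuousOn (κd (2 * Q + 1)) (Set.Ici (1 : ℝ)))
    (hbdd : ∀ q ≤ 2 * Q, ∃ B : ℝ, ∀ x ∈ Set.Ici (1 : ℝ), |κd q x| ≤ B)
    (hint : IntegrableOn (fun x => |κd (2 * Q + 1) x|) (Set.Ici (1 : ℝ))) :
    ∃ C : ℝ, 0 < C ∧ ∀ M : ℕ, 1 ≤ M → ∀ k ∈ Set.Ioc (0 : ℝ) Real.pi,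
      |(∑ l ∈ Finset.Icc 1 M, κ (l : ℝ) * Real.sin (k * l)) -
          ∫ x in (1 : ℝ)..(M : ℝ), κ x * Real.sin (k * x)| ≤ C := by
  subst hκ0
  have hc : RegularDerivChain κd (2 * Q + 1) ((1 : ℕ) : ℝ) := by
    rw [Nat.cast_one]
    exact ⟨hderiv, fun q hq => hbdd q (by omega), hconttop, hint⟩
  obtain ⟨C, hC⟩ := hc.exists_abs_sum_sub_integral_le
  refine ⟨max C 1, by positivity, fun M hM k hk => ?_⟩
  have hk' : |k| ≤ π := abs_le.mpr ⟨by linarith [pi_pos, hk.1], hk.2⟩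
  have hbound := hC M hM k hk' (-(π / 2))
  simp only [Nat.cast_one, ← sub_eq_add_neg, cos_sub_pi_div_two] at hbound
  exact hbound.trans (le_max_left _ _)
end

section
/- Let Q be a natural number and let κ : ℝ → ℝ be (2Q+1)-times continuously differentiable on [1, ∞), such that for every q with 0 ≤ q ≤ 2Q the q-th derivative κ^{(q)} is bounded on [1, ∞), and the (2Q+1)-st derivative κ^{(2Q+1)} is absolutely integrable on [1, ∞). Then for every Λ > 0 the improper integral ∫_1^∞ κ(x) cos(Λ x) / x dx converges. -/
/-!
Write `cos (Λ x)` as the real part of `e x = exp (i Λ x)`, so that `e' = iΛ e` and `‖e‖ = 1`.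
Integrating `∫ f e / x` by parts against the primitive `e / (iΛ)` leaves a boundary term
`f e / (iΛ x) → 0` (as `f` is bounded), the absolutely convergent `∫ f e / (iΛ x²)`, and
`∫ f' e / (iΛ x)`, which has the same shape with `f` replaced by `f'`. Repeating this moves all
derivatives onto `κ` until one reaches `∫ κ^(2Q+1) e / x`, which converges absolutely.
-/

open Real Filter MeasureTheory intervalIntegral Set Topology

def ImproperIntegralConverges {E : Type*} [NormedAddCommGroup E] [NormedSpace ℝ E]
    (f : ℝ → E) (a : ℝ) : Prop :=
  ∃ I, Tendsto (fun M => ∫ x in a..M, f x) atTop (𝓝 I)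

theorem ContinuousOn.intervalIntegrable_of_Ici_s12 {E : Type*} [NormedAddCommGroup E]
    {f : ℝ → E} {a b : ℝ} (hf : ContinuousOn f (Ici a)) (hab : a ≤ b) :
    IntervalIntegrable f volume a b :=
  (hf.mono Icc_subset_Ici_self).intervalIntegrable_of_Icc hab

theorem MeasureTheory.IntegrableOn.mul_of_continuousOn_of_bound {𝕜 : Type*} [RCLike 𝕜]
    {f g : ℝ → 𝕜} {s : Set ℝ} {C : ℝ} (hs : MeasurableSet s) (hf : IntegrableOn f s)
    (hg : ContinuousOn g s) (hgC : ∀ x ∈ s, ‖g x‖ ≤ C) : IntegrableOn (fun x => f x * g x) s :=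
  hf.mul_bdd (hg.aestronglyMeasurable hs) ((ae_restrict_iff' hs).2 (Eventually.of_forall hgC))

namespace ImproperIntegralConverges

section NormedSpace

variable {E : Type*} [NormedAddCommGroup E] [NormedSpace ℝ E] {f g : ℝ → E} {a : ℝ}

theorem of_integrableOn (hf : IntegrableOn f (Ioi a)) : ImproperIntegralConverges f a :=
  ⟨_, intervalIntegral_tendsto_integral_Ioi a hf tendsto_id⟩

theorem sub (hf : ImproperIntegralConverges f a) (hg : ImproperIntegralConverges g a)
    (hfc : ContinuousOn f (Ici a)) (hgc : ContinuousOn g (Ici a)) :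
    ImproperIntegralConverges (fun x => f x - g x) a := by
  obtain ⟨I, hI⟩ := hf
  obtain ⟨J, hJ⟩ := hg
  refine ⟨I - J, (hI.sub hJ).congr' ?_⟩
  filter_upwards [eventually_ge_atTop a] with M hM
  exact (integral_sub (hfc.intervalIntegrable_of_Ici_s12 hM) (hgc.intervalIntegrable_of_Ici_s12 hM)).symm

end NormedSpace

section RCLike

variable {𝕜 : Type*} [RCLike 𝕜] {f : ℝ → 𝕜} {a : ℝ}

theorem div_const (hf : ImproperIntegralConverges f a) (c : 𝕜) :
    ImproperIntegralConverges (fun x => f x / c) a := by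
  obtain ⟨I, hI⟩ := hf
  exact ⟨I / c, by simpa only [intervalIntegral.integral_div] using hI.div_const c⟩

theorem re (hf : ImproperIntegralConverges f a) (hfc : ContinuousOn f (Ici a)) :
    ImproperIntegralConverges (fun x => RCLike.re (f x)) a := by
  obtain ⟨I, hI⟩ := hf
  refine ⟨RCLike.re I, ((RCLike.continuous_re.tendsto I).comp hI).congr' ?_⟩
  filter_upwards [eventually_ge_atTop a] with M hM
  exact (intervalIntegral_re (hfc.intervalIntegrable_of_Ici_s12 hM)).symm

end RCLike

theorem of_mul_deriv {A : Type*} [NormedRing A] [NormedAlgebra ℝ A] [CompleteSpace A]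
    {u v u' v' : ℝ → A} {a : ℝ} {L : A}
    (hu : ∀ x ∈ Ici a, HasDerivAt u (u' x) x) (hv : ∀ x ∈ Ici a, HasDerivAt v (v' x) x)
    (hu' : ContinuousOn u' (Ici a)) (hv' : ContinuousOn v' (Ici a))
    (huv : Tendsto (fun x => u x * v x) atTop (𝓝 L))
    (h : ImproperIntegralConverges (fun x => u' x * v x) a) :
    ImproperIntegralConverges (fun x => u x * v' x) a := by
  obtain ⟨J, hJ⟩ := h
  refine ⟨L - u a * v a - J, ((huv.sub_const _).sub hJ).congr' ?_⟩
  filter_upwards [eventually_ge_atTop a] with M hM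
  have hsub : uIcc a M ⊆ Ici a := by
    rw [uIcc_of_le hM]
    exact Icc_subset_Ici_self
  exact (integral_mul_deriv_eq_deriv_mul (fun x hx => hu x (hsub hx)) (fun x hx => hv x (hsub hx))
    (hu'.intervalIntegrable_of_Ici_s12 hM) (hv'.intervalIntegrable_of_Ici_s12 hM)).symm

end ImproperIntegralConverges

section Oscillatory

variable {a : ℝ} {c : ℂ} {e : ℝ → ℂ}

theorem integrableOn_ofReal_mul_of_norm_le_one {g : ℝ → ℝ} (hg : IntegrableOn g (Ioi a))
    (he : Continuous e) (he_le : ∀ x, ‖e x‖ ≤ 1) :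
    IntegrableOn (fun x => (g x : ℂ) * e x) (Ioi a) :=
  IntegrableOn.mul_of_continuousOn_of_bound measurableSet_Ioi hg.ofReal he.continuousOn
    fun x _ => he_le x

theorem continuousOn_ofReal_div_mul {f : ℝ → ℝ} (ha : 0 < a) (hf : ContinuousOn f (Ici a))
    (he : Continuous e) : ContinuousOn (fun x => ((f x / x : ℝ) : ℂ) * e x) (Ici a) :=
  (Complex.continuous_ofReal.comp_continuousOn
    (hf.div continuousOn_id fun _ hx => (ha.trans_le hx).ne')).mul he.continuousOn

theorem improperIntegralConverges_div_mul_of_integrableOn {f : ℝ → ℝ} (ha : 0 < a)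
    (hf : IntegrableOn f (Ioi a)) (he : Continuous e)
    (he_le : ∀ x, ‖e x‖ ≤ 1) :
    ImproperIntegralConverges (fun x => ((f x / x : ℝ) : ℂ) * e x) a := by
  have hinv : ∀ x ∈ Ioi a, ‖x⁻¹‖ ≤ a⁻¹ := fun x hx => by
    rw [norm_inv, Real.norm_of_nonneg (ha.trans hx).le]
    exact inv_anti₀ ha hx.le
  have hfx : IntegrableOn (fun x => f x / x) (Ioi a) := by
    simpa only [div_eq_mul_inv] using hf.mul_of_continuousOn_of_bound measurableSet_Ioi
      (continuousOn_inv₀.mono fun _ hx => (ha.trans hx).ne') hinv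
  exact .of_integrableOn (integrableOn_ofReal_mul_of_norm_le_one hfx he he_le)

theorem integrableOn_div_sq_of_abs_le {f : ℝ → ℝ} {B : ℝ} (ha : 0 < a)
    (hf : ContinuousOn f (Ici a)) (hfB : ∀ x ∈ Ici a, |f x| ≤ B) :
    IntegrableOn (fun x => f x / x ^ 2) (Ioi a) := by
  have hrpow : IntegrableOn (fun x : ℝ => x ^ (-2 : ℝ)) (Ioi a) :=
    integrableOn_Ioi_rpow_of_lt (by norm_num) ha
  refine (hrpow.mul_of_continuousOn_of_bound measurableSet_Ioi (hf.mono Ioi_subset_Ici_self)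
    fun x hx => hfB x (mem_Ici.2 hx.le)).congr_fun (fun x hx => ?_) measurableSet_Ioi
  dsimp only
  rw [Real.rpow_neg (ha.trans hx).le, Real.rpow_two, div_eq_mul_inv, mul_comm]

theorem tendsto_ofReal_div_mul_atTop_zero {f : ℝ → ℝ} {B : ℝ} (hfB : ∀ x ∈ Ici a, |f x| ≤ B)
    (he_le : ∀ x, ‖e x‖ ≤ 1) : Tendsto (fun x => ((f x / x : ℝ) : ℂ) * e x) atTop (𝓝 0) := by
  refine squeeze_zero_norm' ?_ ((tendsto_const_nhds (x := B)).div_atTop tendsto_id)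
  filter_upwards [eventually_ge_atTop a, eventually_gt_atTop 0] with x hxa hx
  have hB : 0 ≤ B := (abs_nonneg _).trans (hfB x hxa)
  calc ‖((f x / x : ℝ) : ℂ) * e x‖ = |f x| / x * ‖e x‖ := by
        rw [norm_mul, Complex.norm_real, Real.norm_eq_abs, abs_div, abs_of_pos hx]
    _ ≤ B / x * 1 := by gcongr; exacts [hfB x hxa, he_le x]
    _ = B / id x := by rw [mul_one, id]

/-- Integration by parts against the primitive `e / c` of `e`. -/
theorem improperIntegralConverges_div_mul_of_hasDerivAt {f f' : ℝ → ℝ} {B : ℝ} (ha : 0 < a)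
    (hc : c ≠ 0) (he : ∀ x, HasDerivAt e (c * e x) x) (he_le : ∀ x, ‖e x‖ ≤ 1)
    (hf : ∀ x ∈ Ici a, HasDerivAt f (f' x) x) (hf' : ContinuousOn f' (Ici a))
    (hfB : ∀ x ∈ Ici a, |f x| ≤ B)
    (h : ImproperIntegralConverges (fun x => ((f' x / x : ℝ) : ℂ) * e x) a) :
    ImproperIntegralConverges (fun x => ((f x / x : ℝ) : ℂ) * e x) a := by
  have hx0 : ∀ x ∈ Ici a, x ≠ 0 := fun x hx => (ha.trans_le hx).ne'
  have he_cont : Continuous e := continuous_iff_continuousAt.2 fun x => (he x).continuousAt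
  have hf_cont : ContinuousOn f (Ici a) := fun x hx => (hf x hx).continuousAt.continuousWithinAt
  have hsq_cont : ContinuousOn (fun x => f x / x ^ 2) (Ici a) :=
    hf_cont.div (continuousOn_pow 2) fun x hx => pow_ne_zero 2 (hx0 x hx)
  have hu : ∀ x ∈ Ici a, HasDerivAt (fun y => ((f y / y : ℝ) : ℂ))
      ((f' x / x - f x / x ^ 2 : ℝ) : ℂ) x := fun x hx => by
    refine ((hf x hx).div (hasDerivAt_id x) (hx0 x hx)).ofReal_comp.congr_deriv ?_
    simp only [id]
    congr 1
    field_simp [hx0 x hx]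
  have hv : ∀ x ∈ Ici a, HasDerivAt (fun y => e y / c) (e x) x := fun x _ => by
    simpa only [mul_div_cancel_left₀ _ hc] using (he x).div_const c
  have hboundary : Tendsto (fun x => ((f x / x : ℝ) : ℂ) * (e x / c)) atTop (𝓝 0) := by
    simpa only [mul_div_assoc, zero_div] using
      (tendsto_ofReal_div_mul_atTop_zero hfB he_le).div_const c
  have hsq : ImproperIntegralConverges (fun x => ((f x / x ^ 2 : ℝ) : ℂ) * e x) a :=
    .of_integrableOn (integrableOn_ofReal_mul_of_norm_le_one
      (integrableOn_div_sq_of_abs_le ha hf_cont hfB) he_cont he_le)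
  have hsplit : (fun x => ((f' x / x - f x / x ^ 2 : ℝ) : ℂ) * (e x / c)) =
      fun x => (((f' x / x : ℝ) : ℂ) * e x - ((f x / x ^ 2 : ℝ) : ℂ) * e x) / c := by
    ext x
    push_cast
    ring
  refine .of_mul_deriv hu hv (Complex.continuous_ofReal.comp_continuousOn
    ((hf'.div continuousOn_id hx0).sub hsq_cont)) he_cont.continuousOn hboundary ?_
  rw [hsplit]
  exact (h.sub hsq (continuousOn_ofReal_div_mul ha hf' he_cont)
    ((Complex.continuous_ofReal.comp_continuousOn hsq_cont).mul he_cont.continuousOn)).div_const c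

theorem improperIntegralConverges_div_mul_of_iteratedDeriv (ha : 0 < a) (hc : c ≠ 0)
    (he : ∀ x, HasDerivAt e (c * e x) x) (he_le : ∀ x, ‖e x‖ ≤ 1) (n : ℕ) {fd : ℕ → ℝ → ℝ}
    (hderiv : ∀ q < n + 1, ∀ x ∈ Ici a, HasDerivAt (fd q) (fd (q + 1) x) x)
    (hcont : ContinuousOn (fd (n + 1)) (Ici a))
    (hbdd : ∀ q ≤ n, ∃ B, ∀ x ∈ Ici a, |fd q x| ≤ B)
    (hint : IntegrableOn (fd (n + 1)) (Ioi a)) :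
    ImproperIntegralConverges (fun x => ((fd 0 x / x : ℝ) : ℂ) * e x) a := by
  have he_cont : Continuous e := continuous_iff_continuousAt.2 fun x => (he x).continuousAt
  induction n generalizing fd with
  | zero =>
    obtain ⟨B, hB⟩ := hbdd 0 le_rfl
    exact improperIntegralConverges_div_mul_of_hasDerivAt ha hc he he_le (hderiv 0 one_pos)
      hcont hB (improperIntegralConverges_div_mul_of_integrableOn ha hint he_cont he_le)
  | succ n ih =>
    have hcont₁ : ContinuousOn (fd 1) (Ici a) := fun x hx =>
      (hderiv 1 (by omega) x hx).continuousAt.continuousWithinAt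
    obtain ⟨B, hB⟩ := hbdd 0 (by omega)
    exact improperIntegralConverges_div_mul_of_hasDerivAt ha hc he he_le (hderiv 0 (by omega))
      hcont₁ hB (ih (fd := fun q => fd (q + 1)) (fun q hq => hderiv (q + 1) (by omega)) hcont
        (fun q hq => hbdd (q + 1) (by omega)) hint)

end Oscillatory

/-- Convergence of `∫_1^∞ κ(x) cos(Λx)/x dx` (Appendix G): if `κ` is `(2Q+1)`-times
continuously differentiable on `[1,∞)` (the family `κd q` of successive
derivatives, `κd 0 = κ`), with `κd q` bounded on `[1,∞)` for `0 ≤ q ≤ 2Q` and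
`κd (2Q+1)` absolutely integrable on `[1,∞)`, then for every `Λ > 0` the improper
integral `∫_1^∞ κ(x) cos(Λx)/x dx` converges. -/
theorem stmt_12 (Q : ℕ) (κ : ℝ → ℝ) (κd : ℕ → ℝ → ℝ) (hκ0 : κd 0 = κ)
    (hderiv : ∀ q < 2 * Q + 1, ∀ x ∈ Set.Ici (1 : ℝ),
      HasDerivAt (κd q) (κd (q + 1) x) x)
    (hconttop : ContinuousOn (κd (2 * Q + 1)) (Set.Ici (1 : ℝ)))
    (hbdd : ∀ q ≤ 2 * Q, ∃ B : ℝ, ∀ x ∈ Set.Ici (1 : ℝ), |κd q x| ≤ B)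
    (hint : IntegrableOn (fun x => |κd (2 * Q + 1) x|) (Set.Ici (1 : ℝ))) :
    ∀ Λ : ℝ, 0 < Λ → ∃ I : ℝ,
      Tendsto (fun M : ℝ => ∫ x in (1 : ℝ)..M, κ x * Real.cos (Λ * x) / x) atTop
        (nhds I) := by
  intro Λ hΛ
  subst hκ0
  set c : ℂ := Λ * Complex.I
  have he : ∀ x : ℝ, HasDerivAt (fun y : ℝ => Complex.exp (c * y)) (c * Complex.exp (c * x)) x :=
    fun x => (((hasDerivAt_id' (x : ℂ)).const_mul c).comp_ofReal.cexp).congr_deriv (by ring)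
  have he_norm : ∀ x : ℝ, ‖Complex.exp (c * x)‖ = 1 := fun x => by
    simp [c, Complex.norm_exp]
  have hint' : IntegrableOn (κd (2 * Q + 1)) (Ioi 1) :=
    (integrable_norm_iff ((hconttop.mono Ioi_subset_Ici_self).aestronglyMeasurable
      measurableSet_Ioi)).1 (hint.mono_set Ioi_subset_Ici_self)
  have hconv := improperIntegralConverges_div_mul_of_iteratedDeriv one_pos
    (by simp [c, hΛ.ne']) he (fun x => (he_norm x).le) (2 * Q) hderiv hconttop hbdd hint'
  have hκ_cont : ContinuousOn (κd 0) (Ici 1) := fun x hx =>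
    (hderiv 0 (by omega) x hx).continuousAt.continuousWithinAt
  obtain ⟨I, hI⟩ := hconv.re (continuousOn_ofReal_div_mul one_pos hκ_cont (by fun_prop))
  refine ⟨I, hI.congr fun M => integral_congr fun x _ => ?_⟩
  rw [RCLike.re_to_complex, show c * x = ((Λ * x : ℝ) : ℂ) * Complex.I by push_cast; ring,
    Complex.re_ofReal_mul, Complex.exp_ofReal_mul_I_re]
  ring
end

section
/- Let α ∈ (0, 1]. There exists a constant C > 0 such that for every integer M ≥ 1 and every k ∈ (0, π], |∑_{l=1}^{M} sin(k l) / l^α − ∫_1^M sin(k x) / x^α dx| ≤ C. -/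
/-!
Write `S(t) = ∑_{0 ≤ l ≤ ⌊t⌋} sin(kl)` and `T(x) = (cos k - cos(kx)) / k`, the antiderivative of
`sin(kx)` vanishing at `1`. Abel summation turns the sum into `f(M) S(M) - ∫ f' S` and
integration by parts turns the integral into `f(M) T(M) - ∫ f' T`, where `f(x) = x^{-α}`. So the
difference is controlled by `sup |S - T|` times `|f(M)| + ∫ |f'| = f(1) = 1`.
The closed form `S(n) = (cos(k/2) - cos(kn + k/2)) / (2 sin(k/2))` shows `|S - T| ≤ 4` uniformly
in `k ∈ (0, π]`: the only danger, the pole at `k = 0`, cancels because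
`1 / (2 sin(k/2)) - 1 / k` stays bounded.
-/

open Real Finset MeasureTheory intervalIntegral

theorem two_sin_half_mul_sum_sin (k : ℝ) (n : ℕ) :
    2 * sin (k / 2) * ∑ l ∈ Icc 0 n, sin (k * l) = cos (k / 2) - cos (k * n + k / 2) := by
  induction n with
  | zero => simp
  | succ n ih =>
    rw [sum_Icc_succ_top (Nat.zero_le _), mul_add, ih, two_mul_sin_mul_sin, Nat.cast_succ,
      ← cos_neg (k / 2 - _)]
    ring_nf

theorem abs_inv_two_sin_sub_inv_two_mul_le_one {t : ℝ} (ht0 : 0 < t) (ht : t ≤ π / 2) :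
    |(2 * sin t)⁻¹ - (2 * t)⁻¹| ≤ 1 := by
  have hst : sin t ≤ t := sin_le ht0.le
  have hhalf : t / 2 ≤ sin t := by
    have := mul_le_sin ht0.le ht
    have : 2 / 4 * t ≤ 2 / π * t := by gcongr; exact pi_le_four
    linarith
  have hcube : t - sin t ≤ t ^ 3 / 6 := by linarith [sin_ge_sub_cube ht0.le]
  have hkey : (2 * sin t)⁻¹ - (2 * t)⁻¹ = (t - sin t) / (2 * t * sin t) := by
    have : sin t ≠ 0 := by linarith
    field_simp
  rw [hkey, abs_of_nonneg (div_nonneg (by linarith) (by nlinarith)), div_le_one (by nlinarith)]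
  have ht2 : t ≤ 2 := by linarith [pi_le_four]
  nlinarith [mul_le_mul_of_nonneg_left hhalf (by positivity : 0 ≤ 2 * t)]

theorem abs_sum_sin_sub_le {k : ℝ} (hk0 : 0 < k) (hkπ : k ≤ π) (n : ℕ) :
    |∑ l ∈ Icc 0 n, sin (k * l) - (cos k - cos (k * n)) / k| ≤ 3 := by
  have hs : 0 < sin (k / 2) := sin_pos_of_pos_of_lt_pi (by positivity) (by linarith [pi_pos])
  have hsum : ∑ l ∈ Icc 0 n, sin (k * l)
      = (cos (k / 2) - cos (k * n + k / 2)) / (2 * sin (k / 2)) := by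
    rw [eq_div_iff (by positivity), mul_comm, two_sin_half_mul_sum_sin]
  have hsplit : ∑ l ∈ Icc 0 n, sin (k * l) - (cos k - cos (k * n)) / k
      = (cos (k / 2) - cos (k * n + k / 2)) * ((2 * sin (k / 2))⁻¹ - (2 * (k / 2))⁻¹)
        + ((cos (k / 2) - cos k) + (cos (k * n) - cos (k * n + k / 2))) / k := by
    rw [hsum]; field_simp; ring
  have hD : |cos (k / 2) - cos (k * n + k / 2)| ≤ 2 :=
    (abs_sub _ _).trans (by linarith [abs_cos_le_one (k / 2), abs_cos_le_one (k * n + k / 2)])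
  have h1 : |cos (k / 2) - cos k| ≤ k / 2 := by
    simpa [show k / 2 - k = -(k / 2) by ring, abs_of_pos (half_pos hk0)]
      using abs_cos_sub_cos_le (k / 2) k
  have h2 : |cos (k * n) - cos (k * n + k / 2)| ≤ k / 2 := by
    simpa [abs_of_pos (half_pos hk0)] using abs_cos_sub_cos_le (k * n) (k * n + k / 2)
  rw [hsplit]
  calc _ ≤ |cos (k / 2) - cos (k * n + k / 2)| * |(2 * sin (k / 2))⁻¹ - (2 * (k / 2))⁻¹|
        + (|cos (k / 2) - cos k| + |cos (k * n) - cos (k * n + k / 2)|) / k := by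
        grw [abs_add_le, abs_mul, abs_div, abs_of_pos hk0, abs_add_le]
    _ ≤ 2 * 1 + (k / 2 + k / 2) / k := by
        grw [hD, abs_inv_two_sin_sub_inv_two_mul_le_one (half_pos hk0) (by linarith), h1, h2]
    _ = 3 := by field_simp; ring

theorem abs_sum_sin_floor_sub_le {k : ℝ} (hk0 : 0 < k) (hkπ : k ≤ π) {t : ℝ} (ht : 0 ≤ t) :
    |∑ l ∈ Icc 0 ⌊t⌋₊, sin (k * l) - (cos k - cos (k * t)) / k| ≤ 4 := by
  set n := ⌊t⌋₊
  have hnt : |(n : ℝ) - t| ≤ 1 := by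
    rw [abs_sub_comm, abs_of_nonneg (sub_nonneg.2 (Nat.floor_le ht))]
    linarith [Nat.lt_floor_add_one t]
  have hlip : |(cos k - cos (k * n)) / k - (cos k - cos (k * t)) / k| ≤ 1 := by
    rw [← sub_div, sub_sub_sub_cancel_left, abs_div, abs_of_pos hk0, div_le_one hk0]
    calc |cos (k * t) - cos (k * n)| ≤ |k * t - k * n| := abs_cos_sub_cos_le _ _
      _ = k * |(n : ℝ) - t| := by rw [← mul_sub, abs_mul, abs_of_pos hk0, abs_sub_comm]
      _ ≤ k := by nlinarith
  calc _ ≤ |∑ l ∈ Icc 0 n, sin (k * l) - (cos k - cos (k * n)) / k|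
        + |(cos k - cos (k * n)) / k - (cos k - cos (k * t)) / k| := abs_sub_le _ _ _
    _ ≤ 3 + 1 := add_le_add (abs_sum_sin_sub_le hk0 hkπ n) hlip
    _ = 4 := by norm_num

theorem abs_sum_mul_sub_integral_mul_le {c : ℕ → ℝ} (hc : c 0 = 0) {f F φ : ℝ → ℝ} {M : ℕ}
    {B : ℝ} (hM : 1 ≤ M) (hf : ∀ t ∈ Set.Icc (1 : ℝ) M, DifferentiableAt ℝ f t)
    (hf' : IntegrableOn (deriv f) (Set.Icc 1 M))
    (hF : ∀ t ∈ Set.Icc (1 : ℝ) M, HasDerivAt F (φ t) t) (hφ : IntervalIntegrable φ volume 1 M)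
    (hF1 : F 1 = 0) (hB : ∀ t ∈ Set.Icc (1 : ℝ) M, |∑ l ∈ Icc 0 ⌊t⌋₊, c l - F t| ≤ B) :
    |∑ l ∈ Icc 1 M, c l * f l - ∫ x in (1 : ℝ)..M, φ x * f x|
      ≤ B * (|f M| + ∫ x in (1 : ℝ)..M, |deriv f x|) := by
  have hM' : (1 : ℝ) ≤ M := by exact_mod_cast hM
  have hIcc : Set.uIcc (1 : ℝ) M = Set.Icc (1 : ℝ) M := Set.uIcc_of_le hM'
  set E : ℝ → ℝ := fun t ↦ ∑ l ∈ Icc 0 ⌊t⌋₊, c l - F t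
  have hf'i : IntervalIntegrable (deriv f) volume 1 M :=
    (intervalIntegrable_iff_integrableOn_Icc_of_le hM').2 hf'
  have hsum : ∑ l ∈ Icc 1 M, c l * f l = ∑ l ∈ Icc 0 M, f l * c l := by
    rw [Icc_eq_cons_Ioc (Nat.zero_le _), sum_cons, hc, mul_zero, zero_add,
      ← Icc_add_one_left_eq_Ioc, zero_add]
    exact sum_congr rfl fun _ _ ↦ mul_comm _ _
  have hparts :
      ∫ x in (1 : ℝ)..M, φ x * f x = f M * F M - ∫ x in (1 : ℝ)..M, deriv f x * F x := by
    simp_rw [mul_comm (φ _)]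
    rw [integral_mul_deriv_eq_deriv_mul (fun t ht ↦ (hf t (hIcc ▸ ht)).hasDerivAt)
      (fun t ht ↦ hF t (hIcc ▸ ht)) hf'i hφ, hF1, mul_zero, sub_zero]
  have hSf : IntervalIntegrable (fun t ↦ deriv f t * ∑ l ∈ Icc 0 ⌊t⌋₊, c l) volume 1 M :=
    (intervalIntegrable_iff_integrableOn_Icc_of_le hM').2
      (integrableOn_mul_sum_Icc c zero_le_one hf')
  have hFf : IntervalIntegrable (fun t ↦ deriv f t * F t) volume 1 M :=
    hf'i.mul_continuousOn (fun t ht ↦ (hF t (hIcc ▸ ht)).continuousAt.continuousWithinAt)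
  have hdiff : ∑ l ∈ Icc 1 M, c l * f l - ∫ x in (1 : ℝ)..M, φ x * f x
      = f M * E M - ∫ t in (1 : ℝ)..M, deriv f t * E t := by
    rw [hsum, sum_mul_eq_sub_integral_mul₀' c hc M hf hf', ← integral_of_le hM', hparts]
    simp only [E, Nat.floor_natCast, mul_sub, integral_sub hSf hFf]
    ring
  have hint : |∫ t in (1 : ℝ)..M, deriv f t * E t| ≤ B * ∫ t in (1 : ℝ)..M, |deriv f t| := by
    rw [← intervalIntegral.integral_const_mul, ← Real.norm_eq_abs]
    refine norm_integral_le_of_norm_le hM' (ae_of_all _ fun t ht ↦ ?_) (hf'i.abs.const_mul B)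
    rw [Real.norm_eq_abs, abs_mul, mul_comm]
    exact mul_le_mul_of_nonneg_right (hB t (Set.Ioc_subset_Icc_self ht)) (abs_nonneg _)
  rw [hdiff]
  calc _ ≤ |f M| * |E M| + |∫ t in (1 : ℝ)..M, deriv f t * E t| := by
        grw [abs_sub, abs_mul]
    _ ≤ |f M| * B + B * ∫ t in (1 : ℝ)..M, |deriv f t| := by
        grw [hint, hB M ⟨hM', le_rfl⟩]
    _ = _ := by ring

theorem integral_abs_deriv_of_deriv_nonpos {f : ℝ → ℝ} {a b : ℝ} (hab : a ≤ b)
    (hf : ∀ t ∈ Set.Icc a b, DifferentiableAt ℝ f t) (hf' : IntegrableOn (deriv f) (Set.Icc a b))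
    (hf'0 : ∀ t ∈ Set.Icc a b, deriv f t ≤ 0) :
    ∫ t in a..b, |deriv f t| = f a - f b := by
  have hf'i : IntervalIntegrable (deriv f) volume a b :=
    (intervalIntegrable_iff_integrableOn_Icc_of_le hab).2 hf'
  have habs : Set.EqOn (fun t ↦ |deriv f t|) (fun t ↦ -deriv f t) (Set.uIcc a b) := fun t ht ↦
    abs_of_nonpos (hf'0 t (Set.uIcc_of_le hab ▸ ht))
  rw [integral_congr habs, intervalIntegral.integral_neg,
    integral_deriv_eq_sub (Set.uIcc_of_le hab ▸ hf) hf'i, neg_sub]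

theorem abs_sum_mul_sub_integral_mul_le_of_deriv_nonpos {c : ℕ → ℝ} (hc : c 0 = 0)
    {f F φ : ℝ → ℝ} {M : ℕ} {B : ℝ} (hM : 1 ≤ M)
    (hf : ∀ t ∈ Set.Icc (1 : ℝ) M, DifferentiableAt ℝ f t)
    (hf' : IntegrableOn (deriv f) (Set.Icc 1 M)) (hf'0 : ∀ t ∈ Set.Icc (1 : ℝ) M, deriv f t ≤ 0)
    (hfM : 0 ≤ f M) (hF : ∀ t ∈ Set.Icc (1 : ℝ) M, HasDerivAt F (φ t) t)
    (hφ : IntervalIntegrable φ volume 1 M) (hF1 : F 1 = 0)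
    (hB : ∀ t ∈ Set.Icc (1 : ℝ) M, |∑ l ∈ Icc 0 ⌊t⌋₊, c l - F t| ≤ B) :
    |∑ l ∈ Icc 1 M, c l * f l - ∫ x in (1 : ℝ)..M, φ x * f x| ≤ B * f 1 := by
  have := abs_sum_mul_sub_integral_mul_le hc hM hf hf' hF hφ hF1 hB
  rwa [integral_abs_deriv_of_deriv_nonpos (by exact_mod_cast hM) hf hf' hf'0, abs_of_nonneg hfM,
    add_sub_cancel] at this

theorem integrableOn_deriv_rpow_const {p a b : ℝ} (ha : 0 < a) :
    IntegrableOn (deriv fun x : ℝ ↦ x ^ p) (Set.Icc a b) := by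
  rw [deriv_rpow_const']
  exact (continuousOn_const.mul (continuousOn_id.rpow_const fun x hx ↦
    Or.inl (ha.trans_le hx.1).ne')).integrableOn_Icc

theorem deriv_rpow_const_nonpos {p x : ℝ} (hp : p ≤ 0) (hx : 0 ≤ x) :
    deriv (fun x : ℝ ↦ x ^ p) x ≤ 0 := by
  rw [Real.deriv_rpow_const]
  exact mul_nonpos_of_nonpos_of_nonneg hp (rpow_nonneg hx _)

theorem hasDerivAt_cos_sub_cos_mul_div {k : ℝ} (hk : k ≠ 0) (x : ℝ) :
    HasDerivAt (fun x ↦ (cos k - cos (k * x)) / k) (sin (k * x)) x := by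
  have h := (((hasDerivAt_id' x).const_mul k).cos.const_sub (cos k)).div_const k
  rw [mul_one, neg_mul, neg_neg, mul_div_cancel_right₀ _ hk] at h
  exact h

/-- For power-law decay `κ_{l,α} = l^{-α}` with `α ∈ (0,1]` (Appendix D), the
Euler–Maclaurin remainder of the pairing function is bounded uniformly in `k` and
in the number of terms: there is `C > 0` such that for all integers `M ≥ 1` and
all `k ∈ (0, π]`,
`|∑_{l=1}^M sin(kl)/l^α − ∫_1^M sin(kx)/x^α dx| ≤ C`. -/
theorem stmt_13 (α : ℝ) (hα : α ∈ Set.Ioc (0 : ℝ) 1) :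
    ∃ C : ℝ, 0 < C ∧ ∀ M : ℕ, 1 ≤ M → ∀ k ∈ Set.Ioc (0 : ℝ) Real.pi,
      |(∑ l ∈ Finset.Icc 1 M, Real.sin (k * l) / (l : ℝ) ^ α) -
          ∫ x in (1 : ℝ)..(M : ℝ), Real.sin (k * x) / x ^ α| ≤ C := by
  refine ⟨4, by norm_num, fun M hM k ⟨hk0, hkπ⟩ ↦ ?_⟩
  have hM' : (1 : ℝ) ≤ M := by exact_mod_cast hM
  have hdiv : ∀ x : ℝ, 1 ≤ x → sin (k * x) / x ^ α = sin (k * x) * x ^ (-α) := fun x hx ↦ by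
    rw [rpow_neg (by linarith), div_eq_mul_inv]
  have key := abs_sum_mul_sub_integral_mul_le_of_deriv_nonpos (c := fun l ↦ sin (k * l))
    (f := fun x ↦ x ^ (-α)) (B := 4) (by simp) hM
    (fun t ht ↦ (hasDerivAt_rpow_const (Or.inl (by linarith [ht.1]))).differentiableAt)
    (integrableOn_deriv_rpow_const one_pos)
    (fun t ht ↦ deriv_rpow_const_nonpos (by linarith [hα.1]) (by linarith [ht.1]))
    (rpow_nonneg (by linarith) _) (fun t _ ↦ hasDerivAt_cos_sub_cos_mul_div hk0.ne' t)
    ((by fun_prop : Continuous fun x ↦ sin (k * x)).intervalIntegrable _ _) (by simp)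
    (fun t ht ↦ abs_sum_sin_floor_sub_le hk0 hkπ (by linarith [ht.1]))
  rw [one_rpow, mul_one] at key
  convert key using 3
  · exact sum_congr rfl fun l hl ↦ hdiv l (by exact_mod_cast (mem_Icc.1 hl).1)
  · exact integral_congr fun x hx ↦ hdiv x (Set.uIcc_of_le hM' ▸ hx).1
end

section
/- Let α ∈ (0, 1). There exist constants 0 < c ≤ C and a positive integer N₀ such that for every even integer N ≥ N₀, c · N ≤ ∑_{n=0}^{N−1} |f_{α,N}((2n+1)π/N)| ≤ C · N, where f_{α,N}(k) = 2 ∑_{l=1}^{N/2−1} l^{−α} sin(k l) + (N/2)^{−α}. -/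
/-!
Lower bound: for `1 ≤ l ≤ N - 2` the anti-periodic momenta `k_n = (2n+1)π/N` satisfy the
discrete orthogonality `∑ₙ sin (k_n l) sin k_n = (N/2)·[l = 1]` and `∑ₙ sin k_n = 0`, so
`∑ₙ f(k_n) sin k_n = N` and hence `∑ₙ |f(k_n)| ≥ N`.

Upper bound: for `0 < k ≤ π` the sine series `∑_{l ≤ M} l^{-α} sin (k l)` is at most
`(1 + π) k^{α-1}` uniformly in `M`: the terms with `l ≤ 1/k` are bounded through
`|sin x| ≤ x`, the remaining ones by Abel summation against the partial sums of `sin (k l)`,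
which are `O(1/k)`. Reflecting `k ↦ 2π - k` extends this to `(0, 2π)`, and since
`α - 1 > -1` the sum `∑ₙ k_n^{α-1}` is `O(N/α)`.
-/

open Real Finset

theorem two_mul_sin_half_mul_sum_range_sin (a k : ℝ) (n : ℕ) :
    2 * sin (k / 2) * ∑ i ∈ range n, sin (a + k * i)
      = cos (a - k / 2) - cos (a + k * n - k / 2) := by
  have step (i : ℕ) : 2 * sin (k / 2) * sin (a + k * i)
      = cos (a + k * i - k / 2) - cos (a + k * (i + 1 : ℕ) - k / 2) := by
    rw [two_mul_sin_mul_sin, ← cos_neg (k / 2 - _)]; push_cast; ring_nf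
  rw [mul_sum, sum_congr rfl fun i _ => step i,
    sum_range_sub' (fun i : ℕ => cos (a + k * i - k / 2))]
  simp

theorem two_mul_sin_half_mul_sum_range_cos (a k : ℝ) (n : ℕ) :
    2 * sin (k / 2) * ∑ i ∈ range n, cos (a + k * i)
      = sin (a + k * n - k / 2) - sin (a - k / 2) := by
  have step (i : ℕ) : 2 * sin (k / 2) * cos (a + k * i)
      = sin (a + k * (i + 1 : ℕ) - k / 2) - sin (a + k * i - k / 2) := by
    rw [two_mul_sin_mul_cos, ← neg_sub, sin_neg]; push_cast; ring_nf
  rw [mul_sum, sum_congr rfl fun i _ => step i,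
    sum_range_sub (fun i : ℕ => sin (a + k * i - k / 2))]
  simp

theorem abs_sum_range_sin_le {k : ℝ} (hk : sin (k / 2) ≠ 0) (a : ℝ) (n : ℕ) :
    |∑ i ∈ range n, sin (a + k * i)| ≤ 1 / |sin (k / 2)| := by
  have h := two_mul_sin_half_mul_sum_range_sin a k n
  rw [le_div_iff₀ (abs_pos.mpr hk)]
  have : |2 * sin (k / 2) * ∑ i ∈ range n, sin (a + k * i)| ≤ 2 := by
    rw [h]
    exact (abs_sub _ _).trans
      (by linarith [abs_cos_le_one (a - k / 2), abs_cos_le_one (a + k * n - k / 2)])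
  rw [abs_mul, abs_mul, abs_two] at this
  linarith

lemma sin_pi_mul_div_ne_zero {N m : ℕ} (hm : 0 < m) (hmN : m < N) : sin (π * m / N) ≠ 0 := by
  have hN : (0 : ℝ) < N := by exact_mod_cast hm.trans hmN
  refine (sin_pos_of_pos_of_lt_pi (by positivity) ?_).ne'
  rw [div_lt_iff₀ hN, mul_lt_mul_iff_right₀ pi_pos]
  exact_mod_cast hmN

theorem abs_sum_range_mul_le_of_antitone {f g : ℕ → ℝ} {S : ℝ} (hf : Antitone f)
    (hf0 : ∀ i, 0 ≤ f i) (hg : ∀ m, |∑ i ∈ range m, g i| ≤ S) (n : ℕ) :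
    |∑ i ∈ range n, f i * g i| ≤ f 0 * S := by
  have hby := sum_range_by_parts f g n
  simp only [smul_eq_mul] at hby
  have hlast : |f (n - 1) * ∑ i ∈ range n, g i| ≤ f (n - 1) * S := by
    rw [abs_mul, abs_of_nonneg (hf0 _)]
    exact mul_le_mul_of_nonneg_left (hg n) (hf0 _)
  have hrest : |∑ i ∈ range (n - 1), (f (i + 1) - f i) * ∑ j ∈ range (i + 1), g j|
      ≤ (f 0 - f (n - 1)) * S := by
    calc _ ≤ ∑ i ∈ range (n - 1), |(f (i + 1) - f i) * ∑ j ∈ range (i + 1), g j| :=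
          abs_sum_le_sum_abs _ _
      _ ≤ ∑ i ∈ range (n - 1), (f i - f (i + 1)) * S := by
          refine sum_le_sum fun i _ => ?_
          have hdec : 0 ≤ f i - f (i + 1) := sub_nonneg.mpr (hf i.le_succ)
          rw [abs_mul, abs_sub_comm, abs_of_nonneg hdec]
          exact mul_le_mul_of_nonneg_left (hg _) hdec
      _ = (f 0 - f (n - 1)) * S := by rw [← sum_mul, sum_range_sub']
  rw [hby]
  linarith [abs_sub (f (n - 1) * ∑ i ∈ range n, g i)
    (∑ i ∈ range (n - 1), (f (i + 1) - f i) * ∑ j ∈ range (i + 1), g j)]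

section PowerSineSum

variable {α k : ℝ}

theorem abs_sum_Ioc_rpow_neg_mul_sin_le_of_le_inv (hα : α ≤ 1) (hk : 0 < k) {P : ℕ}
    (hP : (P : ℝ) ≤ k⁻¹) :
    |∑ l ∈ Ioc 0 P, (l : ℝ) ^ (-α) * sin (k * l)| ≤ k ^ (α - 1) := by
  have hterm : ∀ l ∈ Ioc 0 P, |(l : ℝ) ^ (-α) * sin (k * l)| ≤ k * k⁻¹ ^ (1 - α) := by
    intro l hl
    obtain ⟨hl0, hlP⟩ := mem_Ioc.mp hl
    have hl : (0 : ℝ) < l := by exact_mod_cast hl0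
    calc |(l : ℝ) ^ (-α) * sin (k * l)|
        ≤ (l : ℝ) ^ (-α) * (k * l) := by
          rw [abs_mul, abs_of_nonneg (by positivity)]
          gcongr
          exact (abs_sin_le_abs).trans (abs_of_pos (by positivity)).le
      _ = k * (l : ℝ) ^ (1 - α) := by
          rw [sub_eq_neg_add, rpow_add hl, rpow_one]; ring
      _ ≤ k * k⁻¹ ^ (1 - α) := by
          gcongr
          exact (Nat.cast_le.mpr hlP).trans hP
  calc _ ≤ ∑ l ∈ Ioc 0 P, |(l : ℝ) ^ (-α) * sin (k * l)| := abs_sum_le_sum_abs _ _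
    _ ≤ P * (k * k⁻¹ ^ (1 - α)) := by
        simpa using sum_le_sum hterm
    _ ≤ k⁻¹ * (k * k⁻¹ ^ (1 - α)) := by gcongr
    _ = k ^ (α - 1) := by
        rw [inv_mul_cancel_left₀ hk.ne', inv_rpow hk.le, ← rpow_neg hk.le, neg_sub]

theorem abs_sum_Ioc_rpow_neg_mul_sin_le_of_inv_lt (hα : 0 ≤ α) (hk0 : 0 < k) (hkπ : k ≤ π)
    {P : ℕ} (hP : k⁻¹ < P + 1) (M : ℕ) :
    |∑ l ∈ Ioc P M, (l : ℝ) ^ (-α) * sin (k * l)| ≤ π * k ^ (α - 1) := by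
  have hsin : k / π ≤ sin (k / 2) := by
    have := mul_le_sin (x := k / 2) (by linarith) (by linarith)
    calc k / π = 2 / π * (k / 2) := by field_simp
      _ ≤ sin (k / 2) := this
  have hsin0 : 0 < sin (k / 2) := lt_of_lt_of_le (by positivity) hsin
  have hlead : ((P + 1 : ℕ) : ℝ) ^ (-α) ≤ k ^ α := by
    rw [← inv_inv k, inv_rpow (inv_pos.mpr hk0).le, ← rpow_neg (inv_pos.mpr hk0).le]
    exact rpow_le_rpow_of_nonpos (by positivity) (by push_cast; exact hP.le) (by linarith)
  have hpartial : 1 / |sin (k / 2)| ≤ π / k := by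
    rw [abs_of_pos hsin0, div_le_div_iff₀ hsin0 hk0]
    rw [div_le_iff₀ pi_pos] at hsin
    linarith
  have habel := abs_sum_range_mul_le_of_antitone (f := fun i => ((P + 1 + i : ℕ) : ℝ) ^ (-α))
    (g := fun i => sin (k * (P + 1 : ℕ) + k * i))
    (fun i j hij => rpow_le_rpow_of_nonpos (by positivity) (by gcongr) (by linarith))
    (fun i => by positivity) (abs_sum_range_sin_le hsin0.ne' _) (M - P)
  rw [← Ico_add_one_add_one_eq_Ioc, sum_Ico_eq_sum_range, show M + 1 - (P + 1) = M - P by omega]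
  calc _ = |∑ i ∈ range (M - P),
            ((P + 1 + i : ℕ) : ℝ) ^ (-α) * sin (k * (P + 1 : ℕ) + k * i)| := by
        simp only [Nat.cast_add, mul_add]
    _ ≤ k ^ α * (π / k) :=
        habel.trans (mul_le_mul hlead hpartial (by positivity) (by positivity))
    _ = π * k ^ (α - 1) := by rw [rpow_sub_one hk0.ne']; ring

theorem abs_sum_rpow_neg_mul_sin_le (hα0 : 0 ≤ α) (hα1 : α ≤ 1) (hk0 : 0 < k)
    (hkπ : k ≤ π) (M : ℕ) :
    |∑ l ∈ Icc 1 M, (l : ℝ) ^ (-α) * sin (k * l)| ≤ (1 + π) * k ^ (α - 1) := by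
  have hpow : 0 ≤ k ^ (α - 1) := by positivity
  rw [← zero_add 1, Icc_add_one_left_eq_Ioc]
  rcases le_total M ⌊k⁻¹⌋₊ with hM | hM
  · have hMk : (M : ℝ) ≤ k⁻¹ := (Nat.cast_le.mpr hM).trans (Nat.floor_le (by positivity))
    nlinarith [abs_sum_Ioc_rpow_neg_mul_sin_le_of_le_inv hα1 hk0 hMk, pi_pos]
  · rw [← sum_Ioc_consecutive _ (Nat.zero_le _) hM]
    have hhead :=
      abs_sum_Ioc_rpow_neg_mul_sin_le_of_le_inv hα1 hk0 (Nat.floor_le (by positivity))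
    have htail := abs_sum_Ioc_rpow_neg_mul_sin_le_of_inv_lt hα0 hk0 hkπ
      (Nat.lt_floor_add_one k⁻¹) M
    linarith [abs_add_le (∑ l ∈ Ioc 0 ⌊k⁻¹⌋₊, (l : ℝ) ^ (-α) * sin (k * l))
      (∑ l ∈ Ioc ⌊k⁻¹⌋₊ M, (l : ℝ) ^ (-α) * sin (k * l))]

theorem abs_sum_rpow_neg_mul_sin_two_pi_sub (α k : ℝ) (M : ℕ) :
    |∑ l ∈ Icc 1 M, (l : ℝ) ^ (-α) * sin ((2 * π - k) * l)|
      = |∑ l ∈ Icc 1 M, (l : ℝ) ^ (-α) * sin (k * l)| := by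
  have hrefl (l : ℕ) : sin ((2 * π - k) * l) = -sin (k * l) := by
    rw [← sin_nat_mul_two_pi_sub]; ring_nf
  simp only [hrefl, mul_neg, sum_neg_distrib, abs_neg]

theorem abs_sum_rpow_neg_mul_sin_le_add (hα0 : 0 ≤ α) (hα1 : α ≤ 1) (hk0 : 0 < k)
    (hk : k < 2 * π) (M : ℕ) :
    |∑ l ∈ Icc 1 M, (l : ℝ) ^ (-α) * sin (k * l)|
      ≤ (1 + π) * (k ^ (α - 1) + (2 * π - k) ^ (α - 1)) := by
  have h1 : 0 ≤ (1 + π) * k ^ (α - 1) := by positivity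
  have h2 : 0 ≤ (1 + π) * (2 * π - k) ^ (α - 1) := by
    have : 0 < 2 * π - k := by linarith
    positivity
  rcases le_total k π with hkπ | hkπ
  · linarith [abs_sum_rpow_neg_mul_sin_le hα0 hα1 hk0 hkπ M]
  · rw [← abs_sum_rpow_neg_mul_sin_two_pi_sub]
    have hk' : 2 * π - k ≤ π := by linarith
    linarith [abs_sum_rpow_neg_mul_sin_le hα0 hα1 (by linarith) hk' M]

end PowerSineSum

theorem mul_add_one_rpow_sub_one_le {α : ℝ} (hα0 : 0 ≤ α) (hα1 : α ≤ 1) {x : ℝ}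
    (hx : 0 ≤ x) :
    α * (x + 1) ^ (α - 1) ≤ (x + 1) ^ α - x ^ α := by
  have hx1 : 0 < x + 1 := by linarith
  have hamgm := geom_mean_le_arith_mean2_weighted hα0 (sub_nonneg.mpr hα1) hx hx1.le
    (add_sub_cancel α 1)
  have hcancel : (x + 1) ^ (1 - α) * (x + 1) ^ (α - 1) = 1 := by
    rw [← rpow_add hx1]; simp
  have hpow : (x + 1) * (x + 1) ^ (α - 1) = (x + 1) ^ α := by
    rw [rpow_sub_one hx1.ne']; field_simp
  have := mul_le_mul_of_nonneg_right hamgm (rpow_nonneg hx1.le (α - 1))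
  rw [mul_assoc, hcancel, mul_one] at this
  nlinarith

theorem sum_range_rpow_sub_one_le {α : ℝ} (hα0 : 0 < α) (hα1 : α ≤ 1) (N : ℕ) :
    ∑ n ∈ range N, ((n : ℝ) + 1) ^ (α - 1) ≤ (N : ℝ) ^ α / α := by
  rw [le_div_iff₀ hα0, sum_mul]
  calc ∑ n ∈ range N, ((n : ℝ) + 1) ^ (α - 1) * α
      ≤ ∑ n ∈ range N, (((n + 1 : ℕ) : ℝ) ^ α - (n : ℝ) ^ α) := by
        refine sum_le_sum fun n _ => ?_
        push_cast
        linarith [mul_add_one_rpow_sub_one_le hα0.le hα1 n.cast_nonneg]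
    _ = (N : ℝ) ^ α := by
        rw [sum_range_sub (fun n : ℕ => (n : ℝ) ^ α)]
        simp [zero_rpow hα0.ne']

noncomputable def antiperiodicMomentum (N n : ℕ) : ℝ := (2 * n + 1) * π / N

namespace antiperiodicMomentum

variable {N n : ℕ}

lemma mul_natCast_eq (m : ℕ) :
    antiperiodicMomentum N n * m = π * m / N + 2 * π * m / N * n := by
  unfold antiperiodicMomentum; ring

theorem sum_cos_mul_eq_zero {m : ℕ} (hm : 0 < m) (hmN : m < N) :
    ∑ n ∈ range N, cos (antiperiodicMomentum N n * m) = 0 := by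
  have hN : (N : ℝ) ≠ 0 := Nat.cast_ne_zero.mpr (by omega)
  have h := two_mul_sin_half_mul_sum_range_cos (π * m / N) (2 * π * m / N) N
  have hend : π * m / N + 2 * π * m / N * N - 2 * π * m / N / 2 = (2 * m : ℕ) * π := by
    field_simp; push_cast; ring
  rw [hend, sin_nat_mul_pi, show 2 * π * m / N / 2 = π * m / N by ring, sub_self, sin_zero,
    sub_zero, mul_eq_zero] at h
  simpa only [mul_natCast_eq] using h.resolve_left (by simpa using sin_pi_mul_div_ne_zero hm hmN)

theorem sum_sin_mul_eq_zero {m : ℕ} (hm : 0 < m) (hmN : m < N) :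
    ∑ n ∈ range N, sin (antiperiodicMomentum N n * m) = 0 := by
  have hN : (N : ℝ) ≠ 0 := Nat.cast_ne_zero.mpr (by omega)
  have h := two_mul_sin_half_mul_sum_range_sin (π * m / N) (2 * π * m / N) N
  have hend : π * m / N + 2 * π * m / N * N - 2 * π * m / N / 2 = m * (2 * π) := by
    field_simp; ring
  rw [hend, cos_nat_mul_two_pi, show 2 * π * m / N / 2 = π * m / N by ring, sub_self, cos_zero,
    sub_self, mul_eq_zero] at h
  simpa only [mul_natCast_eq] using h.resolve_left (by simpa using sin_pi_mul_div_ne_zero hm hmN)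

theorem sum_sin_mul_mul_sin {l : ℕ} (hl : 0 < l) (hlN : l + 1 < N) :
    ∑ n ∈ range N, sin (antiperiodicMomentum N n * l) * sin (antiperiodicMomentum N n)
      = if l = 1 then (N : ℝ) / 2 else 0 := by
  have step (n : ℕ) : sin (antiperiodicMomentum N n * l) * sin (antiperiodicMomentum N n)
      = (cos (antiperiodicMomentum N n * (l - 1 : ℕ))
          - cos (antiperiodicMomentum N n * (l + 1 : ℕ))) / 2 := by
    have key := two_mul_sin_mul_sin (antiperiodicMomentum N n * l) (antiperiodicMomentum N n)
    rw [Nat.cast_sub hl, Nat.cast_add, Nat.cast_one, mul_sub, mul_add, mul_one]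
    linarith
  rw [sum_congr rfl fun n _ => step n, ← sum_div, sum_sub_distrib,
    sum_cos_mul_eq_zero (by omega) hlN, sub_zero]
  split_ifs with h1
  · subst h1
    simp
  · rw [sum_cos_mul_eq_zero (by omega) (by omega), zero_div]

lemma pos (hn : n < N) : 0 < antiperiodicMomentum N n := by
  have : 0 < N := by omega
  unfold antiperiodicMomentum; positivity

lemma lt_two_pi (hn : n < N) : antiperiodicMomentum N n < 2 * π := by
  have hN : (0 : ℝ) < N := by exact_mod_cast (show 0 < N by omega)
  unfold antiperiodicMomentum
  rw [div_lt_iff₀ hN]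
  have : (2 * n + 1 : ℝ) < 2 * N := by exact_mod_cast (show 2 * n + 1 < 2 * N by omega)
  nlinarith [pi_pos]

lemma two_pi_sub (hn : n < N) :
    2 * π - antiperiodicMomentum N n = antiperiodicMomentum N (N - 1 - n) := by
  have hN : (N : ℝ) ≠ 0 := Nat.cast_ne_zero.mpr (by omega)
  unfold antiperiodicMomentum
  rw [Nat.cast_sub (by omega), Nat.cast_sub (by omega)]
  field_simp
  ring

theorem sum_two_pi_sub_rpow_eq (α : ℝ) :
    ∑ n ∈ range N, (2 * π - antiperiodicMomentum N n) ^ (α - 1)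
      = ∑ n ∈ range N, antiperiodicMomentum N n ^ (α - 1) := by
  rw [← sum_range_reflect]
  refine sum_congr rfl fun n hn => ?_
  have hn := mem_range.mp hn
  rw [two_pi_sub (by omega), show N - 1 - (N - 1 - n) = n by omega]

theorem sum_rpow_le {α : ℝ} (hα0 : 0 < α) (hα1 : α ≤ 1) :
    ∑ n ∈ range N, antiperiodicMomentum N n ^ (α - 1) ≤ N / α := by
  rcases N.eq_zero_or_pos with rfl | hN
  · simp
  have hN' : (0 : ℝ) < N := by exact_mod_cast hN
  have hterm (n : ℕ) :
      antiperiodicMomentum N n ^ (α - 1) ≤ ((n : ℝ) + 1) ^ (α - 1) / N ^ (α - 1) := by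
    rw [← div_rpow (by positivity) hN'.le]
    refine rpow_le_rpow_of_nonpos (by positivity) ?_ (by linarith)
    unfold antiperiodicMomentum
    gcongr
    nlinarith [pi_gt_three, n.cast_nonneg (α := ℝ)]
  calc ∑ n ∈ range N, antiperiodicMomentum N n ^ (α - 1)
      ≤ (∑ n ∈ range N, ((n : ℝ) + 1) ^ (α - 1)) / N ^ (α - 1) := by
        rw [sum_div]; exact sum_le_sum fun n _ => hterm n
    _ ≤ (N : ℝ) ^ α / α / N ^ (α - 1) := by
        gcongr; exact sum_range_rpow_sub_one_le hα0 hα1 N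
    _ = N / α := by
        rw [rpow_sub_one hN'.ne']; field_simp

end antiperiodicMomentum

noncomputable def pairingFunction (α : ℝ) (N : ℕ) (k : ℝ) : ℝ :=
  2 * (∑ l ∈ Icc 1 (N / 2 - 1), (l : ℝ) ^ (-α) * sin (k * l)) + ((N : ℝ) / 2) ^ (-α)

section PairingFunction

open antiperiodicMomentum

variable {N : ℕ}

theorem sum_pairingFunction_mul_sin_eq (hN : 4 ≤ N) (α : ℝ) :
    ∑ n ∈ range N,
      pairingFunction α N (antiperiodicMomentum N n) * sin (antiperiodicMomentum N n) = N := by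
  set k := antiperiodicMomentum N
  have hconst : ∑ n ∈ range N, sin (k n) = 0 := by
    simpa using sum_sin_mul_eq_zero (m := 1) one_pos (by omega)
  have horth : ∀ l ∈ Icc 1 (N / 2 - 1),
      2 * (l : ℝ) ^ (-α) * ∑ n ∈ range N, sin (k n * l) * sin (k n)
        = if l = 1 then (N : ℝ) else 0 := by
    intro l hl
    obtain ⟨hl1, hlN⟩ := mem_Icc.mp hl
    rw [sum_sin_mul_mul_sin hl1 (by omega)]
    split_ifs with h
    · rw [h, Nat.cast_one, one_rpow]; ring
    · rw [mul_zero]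
  calc ∑ n ∈ range N, pairingFunction α N (k n) * sin (k n)
      = ∑ l ∈ Icc 1 (N / 2 - 1),
            2 * (l : ℝ) ^ (-α) * ∑ n ∈ range N, sin (k n * l) * sin (k n)
        + ((N : ℝ) / 2) ^ (-α) * ∑ n ∈ range N, sin (k n) := by
        simp only [pairingFunction, add_mul, sum_add_distrib, mul_sum, sum_mul]
        rw [sum_comm]
        congr 1
        exact sum_congr rfl fun l _ => sum_congr rfl fun n _ => by ring
    _ = N := by
        rw [sum_congr rfl horth, sum_ite_eq', if_pos (mem_Icc.mpr ⟨le_rfl, by omega⟩), hconst,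
          mul_zero, add_zero]

theorem le_sum_abs_pairingFunction (hN : 4 ≤ N) (α : ℝ) :
    (N : ℝ) ≤ ∑ n ∈ range N, |pairingFunction α N (antiperiodicMomentum N n)| := by
  rw [← sum_pairingFunction_mul_sin_eq hN α]
  refine sum_le_sum fun n _ => ?_
  calc _ ≤ |pairingFunction α N (antiperiodicMomentum N n) * sin (antiperiodicMomentum N n)| :=
        le_abs_self _
    _ = |pairingFunction α N (antiperiodicMomentum N n)| * |sin (antiperiodicMomentum N n)| :=
        abs_mul _ _
    _ ≤ _ := mul_le_of_le_one_right (abs_nonneg _) (abs_sin_le_one _)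

theorem abs_pairingFunction_le {α k : ℝ} (hα0 : 0 ≤ α) (hα1 : α ≤ 1) (hk0 : 0 < k)
    (hk : k < 2 * π) (hN : 2 ≤ N) :
    |pairingFunction α N k| ≤ 1 + 2 * (1 + π) * (k ^ (α - 1) + (2 * π - k) ^ (α - 1)) := by
  have hconst : |((N : ℝ) / 2) ^ (-α)| ≤ 1 := by
    have : (1 : ℝ) ≤ N / 2 := by rw [le_div_iff₀ two_pos]; exact_mod_cast hN
    rw [abs_of_nonneg (by positivity)]
    exact rpow_le_one_of_one_le_of_nonpos this (by linarith)
  have hsum := abs_sum_rpow_neg_mul_sin_le_add hα0 hα1 hk0 hk (N / 2 - 1)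
  calc |pairingFunction α N k|
      ≤ |2 * ∑ l ∈ Icc 1 (N / 2 - 1), (l : ℝ) ^ (-α) * sin (k * l)|
          + |((N : ℝ) / 2) ^ (-α)| := abs_add_le _ _
    _ ≤ _ := by rw [abs_mul, abs_two]; linarith

theorem sum_abs_pairingFunction_le {α : ℝ} (hα0 : 0 < α) (hα1 : α ≤ 1) (hN : 2 ≤ N) :
    ∑ n ∈ range N, |pairingFunction α N (antiperiodicMomentum N n)|
      ≤ (1 + 4 * (1 + π) / α) * N := by
  set k := antiperiodicMomentum N
  calc ∑ n ∈ range N, |pairingFunction α N (k n)|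
      ≤ ∑ n ∈ range N, (1 + 2 * (1 + π) * (k n ^ (α - 1) + (2 * π - k n) ^ (α - 1))) := by
        refine sum_le_sum fun n hn => ?_
        have hn := mem_range.mp hn
        exact abs_pairingFunction_le hα0.le hα1 (pos hn) (lt_two_pi hn) hN
    _ = N + 4 * (1 + π) * ∑ n ∈ range N, k n ^ (α - 1) := by
        rw [sum_add_distrib, ← mul_sum, sum_add_distrib, sum_two_pi_sub_rpow_eq]
        simp only [sum_const, card_range, nsmul_eq_mul, mul_one]
        ring
    _ ≤ N + 4 * (1 + π) * (N / α) := by gcongr; exact sum_rpow_le hα0 hα1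
    _ = (1 + 4 * (1 + π) / α) * N := by ring

end PairingFunction

/-- For `α ∈ (0,1)` the quantity `γ_α(N) = ∑_k |f_{α,N}(k)|`, with
`f_{α,N}(k) = 2 ∑_{l=1}^{N/2-1} l^{-α} sin(kl) + (N/2)^{-α}` and `k` running over
the anti-periodic momenta `(2n+1)π/N`, scales linearly in `N`: there are
`0 < c ≤ C` and `N₀` such that `c N ≤ γ_α(N) ≤ C N` for all even `N ≥ N₀`. -/
theorem stmt_19 (α : ℝ) (hα : α ∈ Set.Ioo (0 : ℝ) 1) :
    ∃ c C : ℝ, 0 < c ∧ c ≤ C ∧ ∃ N₀ : ℕ, 0 < N₀ ∧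
      ∀ N : ℕ, N₀ ≤ N → Even N →
        c * N ≤
          (∑ n ∈ Finset.range N,
            |2 * (∑ l ∈ Finset.Icc 1 (N / 2 - 1),
                (l : ℝ) ^ (-α) *
                  Real.sin ((2 * (n : ℝ) + 1) * Real.pi / (N : ℝ) * (l : ℝ))) +
              ((N : ℝ) / 2) ^ (-α)|) ∧
          (∑ n ∈ Finset.range N,
            |2 * (∑ l ∈ Finset.Icc 1 (N / 2 - 1),
                (l : ℝ) ^ (-α) *
                  Real.sin ((2 * (n : ℝ) + 1) * Real.pi / (N : ℝ) * (l : ℝ))) +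
              ((N : ℝ) / 2) ^ (-α)|) ≤ C * N := by
  obtain ⟨hα0, hα1⟩ := hα
  have hC : 0 < 4 * (1 + π) / α := by positivity
  refine ⟨1, 1 + 4 * (1 + π) / α, one_pos, by linarith, 4, by norm_num,
    fun N hN _ => ⟨?_, ?_⟩⟩
  -- each summand unfolds to `|pairingFunction α N (antiperiodicMomentum N n)|`
  · rw [one_mul]
    exact le_sum_abs_pairingFunction hN α
  · exact sum_abs_pairingFunction_le hα0 hα1.le (by omega)
end
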